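/- arXiv:2510.11155 — 7 statements merged into one kernel-verified Lean document; each statement's English description precedes it below -/
import Mathlib

section
/- Let (X_α)_{α<ω₁} be a tower of infinite subsets of ℕ with X := X_0 infinite and co-infinite. Let A = {ℕ \ X_α : α < ω₁}, and let B ⊆ 2^ω be an ℵ₁-dense family consisting of infinite subsets of ℕ each of which is almost disjoint from X. Suppose f : A → B is a function such that there are infinitely many n ∈ X with the property that for every Y ∈ A with n ∈ Y there exists m ∈ X with m ≥ n and m ∈ f(Y). Then the tower (X_α)_{α<ω₁} has a pseudointersection; indeed the set X_∞ = {n ∈ X : for every Y ∈ A with n ∈ Y there exists m ∈ X with m ≥ n and m ∈ f(Y)} is a pseudointersection. -/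
theorem stmt0_general
    (X : Ordinal → Set ℕ)
    (A : Set (ℕ → Bool))
    (hA : A = {y : ℕ → Bool | ∃ α < (Cardinal.aleph 1).ord, ∀ n : ℕ, y n = true ↔ n ∉ X α})
    (B : Set (ℕ → Bool))
    (hBad : ∀ Y ∈ B, ({n : ℕ | Y n = true} ∩ X 0).Finite)
    (f : (ℕ → Bool) → (ℕ → Bool))
    (hf : ∀ Y ∈ A, f Y ∈ B)
    (hinf : {n ∈ X 0 | ∀ Y ∈ A, Y n = true →
      ∃ m ∈ X 0, n ≤ m ∧ f Y m = true}.Infinite) :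
    {n ∈ X 0 | ∀ Y ∈ A, Y n = true → ∃ m ∈ X 0, n ≤ m ∧ f Y m = true}.Infinite ∧
    ∀ α < (Cardinal.aleph 1).ord,
      ({n ∈ X 0 | ∀ Y ∈ A, Y n = true → ∃ m ∈ X 0, n ≤ m ∧ f Y m = true} \ X α).Finite := by
  classical
  refine ⟨hinf, fun α hα => ?_⟩
  set Y : ℕ → Bool := fun n => decide (n ∉ X α)
  have hYA : Y ∈ A := hA ▸ ⟨α, hα, fun n => by simp [Y]⟩
  -- Every `n ∈ X_∞ \ X_α` lies in `Y = ℕ \ X_α`, so it is bounded by a point of the finite set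
  -- `f Y ∩ X`.
  refine (hBad (f Y) (hf Y hYA)).lowerClosure.subset ?_
  rintro n ⟨⟨-, hn⟩, hnα⟩
  obtain ⟨m, hmX, hnm, hfm⟩ := hn Y hYA (by simp [Y, hnα])
  exact mem_lowerClosure.2 ⟨m, ⟨hfm, hmX⟩, hnm⟩

/-- Lemma on towers whose statement is Lemma `little` of the paper.
A tower `(X_α)_{α<ω₁}` of infinite subsets of ℕ, with `X = X 0` infinite and
co-infinite; `A` is the set of (characteristic functions of) complements of the
tower elements; `B ⊆ 2^ω` is ℵ₁-dense, consisting of infinite sets almost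
disjoint from `X`.  If `f : A → B` is such that for infinitely many `n ∈ X`,
every `Y ∈ A` with `n ∈ Y` admits `m ∈ X`, `m ≥ n`, with `m ∈ f Y`, then the
set `X_∞` of all such `n` is a pseudointersection of the tower. -/
theorem stmt0
    (X : Ordinal → Set ℕ)
    (htower_inf : ∀ α < (Cardinal.aleph 1).ord, (X α).Infinite)
    (htower : ∀ α β : Ordinal, α < β → β < (Cardinal.aleph 1).ord → (X β \ X α).Finite)
    (hX0inf : (X 0).Infinite) (hX0coinf : (X 0)ᶜ.Infinite)
    (A : Set (ℕ → Bool))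
    (hA : A = {y : ℕ → Bool | ∃ α < (Cardinal.aleph 1).ord, ∀ n : ℕ, y n = true ↔ n ∉ X α})
    (B : Set (ℕ → Bool))
    (hBdense : ∀ U : Set (ℕ → Bool), IsOpen U → U.Nonempty →
      Cardinal.mk ↥(B ∩ U) = Cardinal.aleph 1)
    (hBinf : ∀ Y ∈ B, {n : ℕ | Y n = true}.Infinite)
    (hBad : ∀ Y ∈ B, ({n : ℕ | Y n = true} ∩ X 0).Finite)
    (f : (ℕ → Bool) → (ℕ → Bool))
    (hf : ∀ Y ∈ A, f Y ∈ B)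
    (hinf : {n ∈ X 0 | ∀ Y ∈ A, Y n = true →
      ∃ m ∈ X 0, n ≤ m ∧ f Y m = true}.Infinite) :
    {n ∈ X 0 | ∀ Y ∈ A, Y n = true → ∃ m ∈ X 0, n ≤ m ∧ f Y m = true}.Infinite ∧
    ∀ α < (Cardinal.aleph 1).ord,
      ({n ∈ X 0 | ∀ Y ∈ A, Y n = true → ∃ m ∈ X 0, n ≤ m ∧ f Y m = true} \ X α).Finite :=
  stmt0_general X A hA B hBad f hf hinf
end

section
/- Let ε ∈ (0,1) and let I ⊆ (0,1) be an open interval of length ε. If n ∈ ℕ satisfies 3/2^{n+1} < ε, then I contains a closed interval good at n; that is, there exists a natural number i < 2^n with [(2i+1)/2^{n+1}, (2i+2)/2^{n+1}] ⊆ I. -/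
/-!
Scale by `2 ^ (n + 1)`: the interval becomes `(a * 2 ^ (n + 1), b * 2 ^ (n + 1))`, of length
greater than `3`, and a good interval becomes `[2i + 1, 2i + 2]`. The least odd integer above the
left endpoint exceeds it by at most `2`, so it and its successor both lie inside.
-/

theorem exists_odd_nat_gt_le_add_two {x : ℝ} (hx : -1 ≤ x) :
    ∃ i : ℕ, x < 2 * i + 1 ∧ (2 * i + 1 : ℝ) ≤ x + 2 := by
  refine ⟨⌊(x + 1) / 2⌋₊, ?_, ?_⟩
  · linarith [Nat.lt_floor_add_one ((x + 1) / 2)]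
  · linarith [Nat.floor_le (a := (x + 1) / 2) (by linarith)]

theorem stmt1_general (ε : ℝ)
    (a b : ℝ) (hlen : b - a = ε)
    (hI : Set.Ioo a b ⊆ Set.Ioo (0 : ℝ) 1)
    (n : ℕ) (hn : 3 / 2 ^ (n + 1) < ε) :
    ∃ i : ℕ, i < 2 ^ n ∧
      Set.Icc ((2 * i + 1 : ℝ) / 2 ^ (n + 1)) ((2 * i + 2 : ℝ) / 2 ^ (n + 1)) ⊆
        Set.Ioo a b := by
  have hN : (0 : ℝ) < 2 ^ (n + 1) := by positivity
  have hlong : 3 < (b - a) * 2 ^ (n + 1) := by rwa [hlen, ← div_lt_iff₀ hN]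
  have hab : a < b := by nlinarith
  obtain ⟨ha, hb⟩ := (Set.Ioo_subset_Ioo_iff hab).1 hI
  obtain ⟨i, hleft, hright⟩ := exists_odd_nat_gt_le_add_two (x := a * 2 ^ (n + 1)) (by nlinarith)
  have hlow : a < (2 * i + 1 : ℝ) / 2 ^ (n + 1) := by rwa [lt_div_iff₀ hN]
  have hhigh : (2 * i + 2 : ℝ) / 2 ^ (n + 1) < b := by rw [div_lt_iff₀ hN]; linarith
  have hi : i < 2 ^ n := by
    have : (2 * i + 2 : ℝ) < 2 ^ (n + 1) := by rw [← div_lt_one hN]; linarith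
    rw [pow_succ] at this
    exact_mod_cast (by linarith : (i : ℝ) < 2 ^ n)
  exact ⟨i, hi, Set.Icc_subset_Ioo hlow hhigh⟩

/-- if `I = (a,b) ⊆ (0,1)` is an open interval of length `ε` and
`3/2^(n+1) < ε`, then `I` contains a closed interval good at `n`, i.e. an
interval `[(2i+1)/2^(n+1), (2i+2)/2^(n+1)]` with `i < 2^n`. -/
theorem stmt1 (ε : ℝ) (hε : ε ∈ Set.Ioo (0 : ℝ) 1)
    (a b : ℝ) (hlen : b - a = ε)
    (hI : Set.Ioo a b ⊆ Set.Ioo (0 : ℝ) 1)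
    (n : ℕ) (hn : 3 / 2 ^ (n + 1) < ε) :
    ∃ i : ℕ, i < 2 ^ n ∧
      Set.Icc ((2 * i + 1 : ℝ) / 2 ^ (n + 1)) ((2 * i + 2 : ℝ) / 2 ^ (n + 1)) ⊆
        Set.Ioo a b :=
  stmt1_general ε a b hlen hI n hn
end

section
/- Let X ⊆ ℕ be infinite and let A, B ⊆ (0,1) be ℵ₁-dense sets containing no dyadic rationals such that for every finite set F ⊆ A there are infinitely many l ∈ X for which no element of F lies in any interval good at l. Let P be a reasonable set of finite partial isomorphisms from A to B. Then for every p ∈ P and every k ∈ ℕ there exist q ∈ P with q ⊇ p and n ∈ X with n ≥ k such that every strictly increasing bijection g : A → B extending q satisfies: for every a ∈ A lying in some interval good at n, the point g(a) lies in some interval good at m for some m ∈ X with m ≥ n. -/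
/-- The closed interval good at `n` with index `i`. -/
noncomputable def goodInterval (n i : ℕ) : Set ℝ :=
  Set.Icc ((2 * i + 1 : ℝ) / 2 ^ (n + 1)) ((2 * i + 2 : ℝ) / 2 ^ (n + 1))

/-- `p` is a finite partial isomorphism from `A` to `B`: a finite set of pairs
`(x, y)` with `x ∈ A`, `y ∈ B`, which is strictly increasing (hence functional
and injective). -/
def IsPartialIso (A B : Set ℝ) (p : Finset (ℝ × ℝ)) : Prop :=
  (∀ q ∈ p, q.1 ∈ A ∧ q.2 ∈ B) ∧ ∀ q ∈ p, ∀ r ∈ p, (q.1 < r.1 ↔ q.2 < r.2)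

/-- The condition `p` extended by the conventions `0 ↦ 0` and `1 ↦ 1`. -/
noncomputable def extPair (p : Finset (ℝ × ℝ)) : Finset (ℝ × ℝ) :=
  insert ((0 : ℝ), (0 : ℝ)) (insert ((1 : ℝ), (1 : ℝ)) p)

/-- `P` is a reasonable set of finite partial isomorphisms from `A` to `B`:
every member is a finite partial isomorphism, `P` is closed under restriction,
and `P` has the dense mapping property. -/
def Reasonable (A B : Set ℝ) (P : Set (Finset (ℝ × ℝ))) : Prop :=
  (∀ p ∈ P, IsPartialIso A B p) ∧
  (∀ p ∈ P, ∀ q ⊆ p, q ∈ P) ∧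
  (∀ p ∈ P, ∀ x ∈ A, (∀ q ∈ p, q.1 ≠ x) →
    ∀ x₀ y₀ x₁ y₁ : ℝ, (x₀, y₀) ∈ extPair p → (x₁, y₁) ∈ extPair p →
      x₀ < x → x < x₁ →
      (∀ q ∈ extPair p, q.1 < x → q.1 ≤ x₀) →
      (∀ q ∈ extPair p, x < q.1 → x₁ ≤ q.1) →
      ∀ u v : ℝ, y₀ ≤ u → u < v → v ≤ y₁ →
        ∃ q ∈ P, p ⊆ q ∧ ∃ y : ℝ, u < y ∧ y < v ∧ (x, y) ∈ q)

lemma mem_extPair {q : Finset (ℝ × ℝ)} {r : ℝ × ℝ} :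
    r ∈ extPair q ↔ r = (0, 0) ∨ r = (1, 1) ∨ r ∈ q := by
  simp [extPair]

lemma extPair_mono {A B : Set ℝ} (hA01 : A ⊆ Set.Ioo 0 1) (hB01 : B ⊆ Set.Ioo 0 1)
    {q : Finset (ℝ × ℝ)} (hq : IsPartialIso A B q) :
    ∀ r ∈ extPair q, ∀ s ∈ extPair q, r.1 < s.1 → r.2 < s.2 := by
  rintro r hr s hs hlt
  rcases mem_extPair.mp hr with h | h | h <;> rcases mem_extPair.mp hs with h' | h' | h'
  · subst h; subst h'; simp at hlt
  · subst h; subst h'; norm_num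
  · subst h; exact (hB01 (hq.1 s h').2).1
  · subst h; subst h'; simp at hlt; linarith
  · subst h; subst h'; simp at hlt
  · subst h; exact absurd hlt (not_lt.mpr (hA01 (hq.1 s h').1).2.le)
  · subst h'; exact absurd hlt (not_lt.mpr (hA01 (hq.1 r h).1).1.le)
  · subst h'; exact (hB01 (hq.1 r h).2).2
  · exact (hq.2 r h s h').mp hlt

lemma extPair_bounds {A B : Set ℝ} (hA01 : A ⊆ Set.Ioo 0 1) (hB01 : B ⊆ Set.Ioo 0 1)
    {q : Finset (ℝ × ℝ)} (hq : IsPartialIso A B q) :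
    ∀ r ∈ extPair q, 0 ≤ r.1 ∧ r.1 ≤ 1 ∧ 0 ≤ r.2 ∧ r.2 ≤ 1 := by
  intro r hr
  rcases mem_extPair.mp hr with h | h | h <;> try (subst h; norm_num)
  have h1 := hA01 (hq.1 r h).1
  have h2 := hB01 (hq.1 r h).2
  exact ⟨h1.1.le, h1.2.le, h2.1.le, h2.2.le⟩

lemma notGood_of_even {n t : ℕ} {x : ℝ} (h1 : (2 * t : ℝ) / 2 ^ (n + 1) < x)
    (h2 : x < (2 * t + 1 : ℝ) / 2 ^ (n + 1)) : ∀ j : ℕ, x ∉ goodInterval n j := by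
  intro j hj
  obtain ⟨hl, hr⟩ := hj
  have hp : (0 : ℝ) < 2 ^ (n + 1) := by positivity
  rw [div_le_iff₀ hp] at hl
  rw [le_div_iff₀ hp] at hr
  rw [div_lt_iff₀ hp] at h1
  rw [lt_div_iff₀ hp] at h2
  have hjt' : j < t := by exact_mod_cast (by nlinarith : (j:ℝ) < t)
  have : (j : ℝ) + 1 ≤ t := by exact_mod_cast hjt'
  nlinarith

lemma pick_good (m : ℕ) (y₀ y₁ : ℝ) (h0 : 0 ≤ y₀) (h1 : y₁ ≤ 1) (h : 2 / 2 ^ m < y₁ - y₀) :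
    ∃ j : ℕ, j < 2 ^ m ∧ y₀ < (2 * j + 1 : ℝ) / 2 ^ (m + 1) ∧
      (2 * j + 2 : ℝ) / 2 ^ (m + 1) < y₁ := by
  have hD : (0:ℝ) < 2 ^ m := by positivity
  set j : ℕ := ⌊y₀ * 2 ^ m⌋₊ + 1 with hj
  have f1 : y₀ * 2 ^ m < j := by
    have := Nat.lt_floor_add_one (y₀ * 2 ^ m)
    push_cast [hj]; push_cast at this; linarith
  have f2 : (j : ℝ) ≤ y₀ * 2 ^ m + 1 := by
    have := Nat.floor_le (by positivity : (0:ℝ) ≤ y₀ * 2 ^ m)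
    push_cast [hj]; linarith
  have hdiv : 2 / (2:ℝ) ^ m * 2 ^ m = 2 := by field_simp
  have hjlt : j < 2 ^ m := by
    have : (j : ℝ) < 2 ^ m := by nlinarith
    exact_mod_cast this
  refine ⟨j, hjlt, ?_, ?_⟩
  · rw [lt_div_iff₀ (by positivity : (0:ℝ) < 2 ^ (m+1))]
    have h2 : (2:ℝ) ^ (m+1) = 2 * 2 ^ m := by ring
    rw [h2]; nlinarith
  · rw [div_lt_iff₀ (by positivity : (0:ℝ) < 2 ^ (m+1))]
    have h2 : (2:ℝ) ^ (m+1) = 2 * 2 ^ m := by ring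
    rw [h2]; nlinarith

lemma pick_m {X : Set ℕ} (hX : X.Infinite) (n : ℕ) (c : ℝ) :
    ∃ m ∈ X, n ≤ m ∧ c < 2 ^ m := by
  obtain ⟨N, hN⟩ := exists_nat_gt c
  obtain ⟨m, hm, hlt⟩ := hX.exists_gt (max n N)
  refine ⟨m, hm, le_trans (le_max_left _ _) hlt.le, ?_⟩
  have h1 : (N:ℝ) ≤ m := by exact_mod_cast le_trans (le_max_right n N) hlt.le
  have h2 : (m:ℝ) < 2 ^ m := by exact_mod_cast (Nat.lt_two_pow_self (n := m))
  linarith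

lemma dense_nonempty {A : Set ℝ}
    (hAdense : ∀ a b : ℝ, 0 ≤ a → a < b → b ≤ 1 →
      Cardinal.mk ↥(A ∩ Set.Ioo a b) = Cardinal.aleph 1)
    {a b : ℝ} (h1 : 0 ≤ a) (h2 : a < b) (h3 : b ≤ 1) : ∃ x ∈ A, a < x ∧ x < b := by
  have h := hAdense a b h1 h2 h3
  have hne : (A ∩ Set.Ioo a b).Nonempty := by
    rw [← Set.nonempty_coe_sort, ← Cardinal.mk_ne_zero_iff, h]
    exact (Cardinal.aleph_pos 1).ne'
  obtain ⟨x, hx1, hx2⟩ := hne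
  exact ⟨x, hx1, hx2.1, hx2.2⟩

lemma neighbor_below (q : Finset (ℝ × ℝ)) {c : ℝ} (hc0 : 0 < c) :
    ∃ x₀ y₀ : ℝ, (x₀, y₀) ∈ extPair q ∧ x₀ < c ∧ ∀ r ∈ extPair q, r.1 < c → r.1 ≤ x₀ := by
  have hne : ((extPair q).filter (fun r => r.1 < c)).Nonempty :=
    ⟨(0, 0), Finset.mem_filter.mpr ⟨mem_extPair.mpr (Or.inl rfl), hc0⟩⟩
  obtain ⟨r₀, hr₀, hmax⟩ := Finset.exists_max_image _ Prod.fst hne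
  rw [Finset.mem_filter] at hr₀
  refine ⟨r₀.1, r₀.2, by simpa using hr₀.1, hr₀.2, fun r hr hrc => ?_⟩
  exact hmax r (Finset.mem_filter.mpr ⟨hr, hrc⟩)

lemma neighbor_above (q : Finset (ℝ × ℝ)) {c : ℝ} (hc1 : c < 1) :
    ∃ x₁ y₁ : ℝ, (x₁, y₁) ∈ extPair q ∧ c < x₁ ∧ ∀ r ∈ extPair q, c < r.1 → x₁ ≤ r.1 := by
  have hne : ((extPair q).filter (fun r => c < r.1)).Nonempty :=
    ⟨(1, 1), Finset.mem_filter.mpr ⟨mem_extPair.mpr (Or.inr (Or.inl rfl)), hc1⟩⟩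
  obtain ⟨r₁, hr₁, hmin⟩ := Finset.exists_min_image _ Prod.fst hne
  rw [Finset.mem_filter] at hr₁
  refine ⟨r₁.1, r₁.2, by simpa using hr₁.1, hr₁.2, fun r hr hrc => ?_⟩
  exact hmin r (Finset.mem_filter.mpr ⟨hr, hrc⟩)

lemma frac_lt {a b : ℝ} {D : ℝ} (h : a < b) (hD : 0 < D) : a / D < b / D := by
  have := mul_lt_mul_of_pos_right h (inv_pos.mpr hD)
  simpa [div_eq_mul_inv] using this

set_option maxHeartbeats 2000000 in
/-- the density lemma (Lemma `mainlemma` of the paper). -/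
theorem stmt3 (X : Set ℕ) (hX : X.Infinite)
    (A B : Set ℝ) (hA01 : A ⊆ Set.Ioo 0 1) (hB01 : B ⊆ Set.Ioo 0 1)
    (hAdense : ∀ a b : ℝ, 0 ≤ a → a < b → b ≤ 1 →
      Cardinal.mk ↥(A ∩ Set.Ioo a b) = Cardinal.aleph 1)
    (hBdense : ∀ a b : ℝ, 0 ≤ a → a < b → b ≤ 1 →
      Cardinal.mk ↥(B ∩ Set.Ioo a b) = Cardinal.aleph 1)
    (hAdyadic : ∀ x ∈ A, ¬ ∃ (k : ℤ) (m : ℕ), x = (k : ℝ) / 2 ^ m)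
    (hBdyadic : ∀ x ∈ B, ¬ ∃ (k : ℤ) (m : ℕ), x = (k : ℝ) / 2 ^ m)
    (havoid : ∀ F : Finset ℝ, ↑F ⊆ A →
      {l ∈ X | ∀ a ∈ F, ∀ i < 2 ^ l, a ∉ goodInterval l i}.Infinite)
    (P : Set (Finset (ℝ × ℝ))) (hP : Reasonable A B P)
    (p : Finset (ℝ × ℝ)) (hp : p ∈ P) (k : ℕ) :
    ∃ q ∈ P, p ⊆ q ∧ ∃ n ∈ X, k ≤ n ∧
      ∀ g : ℝ → ℝ, StrictMonoOn g A → Set.BijOn g A B →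
        (∀ r ∈ q, g r.1 = r.2) →
        ∀ a ∈ A, (∃ i < 2 ^ n, a ∈ goodInterval n i) →
          ∃ m ∈ X, n ≤ m ∧ ∃ i < 2 ^ m, g a ∈ goodInterval m i := by

  classical
  obtain ⟨hIso, hRestr, hDense⟩ := hP
  -- choose a level n avoiding dom p
  have hF : ↑(p.image Prod.fst) ⊆ A := by
    intro x hx
    simp only [Finset.coe_image, Set.mem_image, Finset.mem_coe] at hx
    obtain ⟨r, hr, hrx⟩ := hx
    exact hrx ▸ ((hIso p hp).1 r hr).1
  obtain ⟨n, hnmem, hkn⟩ := (havoid (p.image Prod.fst) hF).exists_gt k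
  obtain ⟨hnX, hnavoid⟩ := hnmem
  have hpavoid : ∀ r ∈ p, ∀ j < 2 ^ n, r.1 ∉ goodInterval n j :=
    fun r hr => hnavoid r.1 (Finset.mem_image_of_mem _ hr)
  -- main induction on good intervals at level n
  have main : ∀ i : ℕ, ∃ q ∈ P, p ⊆ q ∧ (∀ r ∈ q, ∀ j < 2 ^ n, r.1 ∉ goodInterval n j) ∧
      ∀ j : ℕ, j < i → j < 2 ^ n →
        ∀ g : ℝ → ℝ, StrictMonoOn g A → Set.BijOn g A B → (∀ r ∈ q, g r.1 = r.2) →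
        ∀ a ∈ A, a ∈ goodInterval n j →
          ∃ m ∈ X, n ≤ m ∧ ∃ i' < 2 ^ m, g a ∈ goodInterval m i' := by
    intro i
    induction i with
    | zero => exact ⟨p, hp, subset_rfl, hpavoid, fun j hj => absurd hj (Nat.not_lt_zero j)⟩
    | succ i ih =>
      obtain ⟨q, hqP, hpq, hqavoid, hqforce⟩ := ih
      by_cases hi : i < 2 ^ n
      case neg =>
        refine ⟨q, hqP, hpq, hqavoid, fun j hj hj2 => hqforce j ?_ hj2⟩
        exact lt_of_lt_of_le hj2 (Nat.le_of_not_lt hi)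
      case pos =>
      -- endpoints of the i-th good interval at n : c = (2i+1)/2^(n+1), d = (2i+2)/2^(n+1)
      have hp2 : (0:ℝ) < 2 ^ (n + 1) := by positivity
      have hi' : (i:ℝ) + 1 ≤ 2 ^ n := by exact_mod_cast hi
      have h2n1 : (2:ℝ) ^ (n+1) = 2 * 2 ^ n := by ring
      have hc0 : (0:ℝ) < (2 * (i:ℝ) + 1) / 2 ^ (n + 1) := by positivity
      have hcd : (2 * (i:ℝ) + 1) / 2 ^ (n + 1) < (2 * (i:ℝ) + 2) / 2 ^ (n + 1) :=
        frac_lt (by linarith) hp2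
      have hd1 : (2 * (i:ℝ) + 2) / 2 ^ (n + 1) ≤ 1 := by
        rw [div_le_one hp2, h2n1]; linarith
      have hc1 : (2 * (i:ℝ) + 1) / 2 ^ (n + 1) < 1 := lt_of_lt_of_le hcd hd1
      have hevenc : (2 * (i:ℝ)) / 2 ^ (n + 1) < (2 * (i:ℝ) + 1) / 2 ^ (n + 1) :=
        frac_lt (by linarith) hp2
      -- neighbor below c
      obtain ⟨x₀, y₀, hx₀mem, hx₀c, hx₀max⟩ := neighbor_below q hc0
      have hx₀b := extPair_bounds hA01 hB01 (hIso q hqP) _ hx₀mem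
      -- pick a₀ in the even interval just left of c, above all of dom q below c
      obtain ⟨a₀, ha₀A, ha₀l, ha₀r⟩ := dense_nonempty hAdense
        (le_trans (by positivity) (le_max_right x₀ ((2 * (i:ℝ)) / 2 ^ (n + 1))))
        (max_lt hx₀c hevenc) hc1.le
      have hx₀a₀ : x₀ < a₀ := lt_of_le_of_lt (le_max_left _ _) ha₀l
      have heva₀ : (2 * (i:ℝ)) / 2 ^ (n + 1) < a₀ := lt_of_le_of_lt (le_max_right _ _) ha₀l
      have ha₀notdom : ∀ r ∈ q, r.1 ≠ a₀ := by
        intro r hr he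
        have h := hx₀max r (mem_extPair.mpr (Or.inr (Or.inr hr))) (he ▸ ha₀r)
        rw [he] at h; linarith
      have ha₀max : ∀ r ∈ extPair q, r.1 < a₀ → r.1 ≤ x₀ :=
        fun r hr h => hx₀max r hr (h.trans ha₀r)
      have ha₀1 : a₀ < 1 := ha₀r.trans hc1
      -- neighbor above a₀
      obtain ⟨x₁, y₁, hx₁mem, hx₁gt, hx₁min⟩ := neighbor_above q ha₀1
      have hx₁b := extPair_bounds hA01 hB01 (hIso q hqP) _ hx₁mem
      have hy₀y₁ : y₀ < y₁ :=
        extPair_mono hA01 hB01 (hIso q hqP) _ hx₀mem _ hx₁mem (hx₀a₀.trans hx₁gt)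
      have hy₀0 : 0 ≤ y₀ := hx₀b.2.2.1
      have hy₁1 : y₁ ≤ 1 := hx₁b.2.2.2
      have hy₀1 : y₀ < 1 := lt_of_lt_of_le hy₀y₁ hy₁1
      -- x₁ is beyond the i-th good interval
      have hx₁d : (2 * (i:ℝ) + 2) / 2 ^ (n + 1) < x₁ ∨ (x₁ = 1 ∧ y₁ = 1) := by
        rcases mem_extPair.mp hx₁mem with h | h | h
        · exfalso
          have hz : x₁ = 0 := congrArg Prod.fst h
          have ha₀0 : 0 < a₀ := (hA01 ha₀A).1
          rw [hz] at hx₁gt; linarith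
        · right
          exact ⟨congrArg Prod.fst h, congrArg Prod.snd h⟩
        · left
          have hng := hqavoid _ h i hi
          simp only [goodInterval, Set.mem_Icc, not_and, not_le] at hng
          have hcx₁ : (2 * (i:ℝ) + 1) / 2 ^ (n + 1) ≤ x₁ := by
            by_contra hcon
            push_neg at hcon
            have := hx₀max _ (mem_extPair.mpr (Or.inr (Or.inr h))) hcon
            linarith
          exact hng hcx₁
      rcases hx₁d with hdx₁ | ⟨hx₁1, hy₁one⟩
      · -- main case : the good interval does not touch 1
        obtain ⟨m, hmX, hnm, hm2⟩ := pick_m hX n (2 / (y₁ - y₀))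
        have hyy : 0 < y₁ - y₀ := by linarith
        have hgap : 2 / 2 ^ m < y₁ - y₀ := by
          rw [div_lt_iff₀ hyy] at hm2
          rw [div_lt_iff₀ (by positivity : (0:ℝ) < 2 ^ m)]
          nlinarith
        obtain ⟨j, hj2m, hjl, hjr⟩ := pick_good m y₀ y₁ hy₀0 hy₁1 hgap
        have hmp : (0:ℝ) < 2 ^ (m + 1) := by positivity
        have hlKrK : (2 * (j:ℝ) + 1) / 2 ^ (m + 1) < (2 * (j:ℝ) + 2) / 2 ^ (m + 1) :=
          frac_lt (by linarith) hmp
        -- first extension: a₀ ↦ ym ∈ (lK, rK)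
        obtain ⟨Q, hQP, hqQ, ym, hyml, hymr, hmemQ⟩ :=
          hDense q hqP a₀ ha₀A ha₀notdom x₀ y₀ x₁ y₁ hx₀mem hx₁mem hx₀a₀ hx₁gt
            ha₀max hx₁min ((2 * (j:ℝ) + 1) / 2 ^ (m + 1)) ((2 * (j:ℝ) + 2) / 2 ^ (m + 1))
            hjl.le hlKrK hjr.le
        have hq'P : insert (a₀, ym) q ∈ P :=
          hRestr Q hQP _ (Finset.insert_subset hmemQ hqQ)
        -- pick a₁ in the even interval just right of d
        have hev3 : (2 * (i:ℝ) + 2) / 2 ^ (n + 1) < (2 * (i:ℝ) + 3) / 2 ^ (n + 1) :=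
          frac_lt (by linarith) hp2
        have hda : (2 * (i:ℝ) + 2) / 2 ^ (n + 1) < min x₁ ((2 * (i:ℝ) + 3) / 2 ^ (n + 1)) :=
          lt_min hdx₁ hev3
        obtain ⟨a₁, ha₁A, ha₁l, ha₁r⟩ := dense_nonempty hAdense
          (by positivity : (0:ℝ) ≤ (2 * (i:ℝ) + 2) / 2 ^ (n + 1))
          hda (le_trans (min_le_left _ _) hx₁b.2.1)
        have ha₁x₁ : a₁ < x₁ := lt_of_lt_of_le ha₁r (min_le_left _ _)
        have ha₁ev : a₁ < (2 * (i:ℝ) + 3) / 2 ^ (n + 1) :=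
          lt_of_lt_of_le ha₁r (min_le_right _ _)
        have ha₀a₁ : a₀ < a₁ := by linarith
        have ha₁notdom : ∀ r ∈ insert (a₀, ym) q, r.1 ≠ a₁ := by
          intro r hr he
          rcases Finset.mem_insert.mp hr with h | h
          · rw [h] at he; simp at he; linarith
          · have h2 : x₁ ≤ r.1 := hx₁min r (mem_extPair.mpr (Or.inr (Or.inr h)))
              (by rw [he]; exact ha₀a₁)
            rw [he] at h2; linarith
        have hsub : extPair q ⊆ extPair (insert (a₀, ym) q) := by
          apply Finset.insert_subset_insert
          apply Finset.insert_subset_insert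
          exact Finset.subset_insert _ _
        have hmem1 : (a₀, ym) ∈ extPair (insert (a₀, ym) q) :=
          mem_extPair.mpr (Or.inr (Or.inr (Finset.mem_insert_self _ _)))
        have hmem2 : (x₁, y₁) ∈ extPair (insert (a₀, ym) q) := hsub hx₁mem
        have ha₁max : ∀ r ∈ extPair (insert (a₀, ym) q), r.1 < a₁ → r.1 ≤ a₀ := by
          intro r hr hlt
          rcases mem_extPair.mp hr with h | h | h
          · have hz : r.1 = 0 := congrArg Prod.fst h
            rw [hz]; exact (hA01 ha₀A).1.le
          · exfalso
            have hz : r.1 = 1 := congrArg Prod.fst h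
            rw [hz] at hlt
            have := hx₁b.2.1
            linarith
          · rcases Finset.mem_insert.mp h with h' | h'
            · rw [h']
            · by_contra hcon
              push_neg at hcon
              have := hx₁min r (mem_extPair.mpr (Or.inr (Or.inr h'))) hcon
              linarith
        have ha₁min : ∀ r ∈ extPair (insert (a₀, ym) q), a₁ < r.1 → x₁ ≤ r.1 := by
          intro r hr hlt
          rcases mem_extPair.mp hr with h | h | h
          · exfalso
            have hz : r.1 = 0 := congrArg Prod.fst h
            rw [hz] at hlt
            have : (0:ℝ) < (2 * (i:ℝ) + 2) / 2 ^ (n + 1) := by positivity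
            linarith
          · have hz : r.1 = 1 := congrArg Prod.fst h
            rw [hz]; exact hx₁b.2.1
          · rcases Finset.mem_insert.mp h with h' | h'
            · exfalso
              have hz : r.1 = a₀ := congrArg Prod.fst h'
              rw [hz] at hlt; linarith
            · exact hx₁min r (mem_extPair.mpr (Or.inr (Or.inr h'))) (ha₀a₁.trans hlt)
        -- second extension: a₁ ↦ yp ∈ (ym, rK)
        obtain ⟨Q', hQ'P, hq'Q', yp, hypl, hypr, hmemQ'⟩ :=
          hDense (insert (a₀, ym) q) hq'P a₁ ha₁A ha₁notdom a₀ ym x₁ y₁ hmem1 hmem2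
            ha₀a₁ ha₁x₁ ha₁max ha₁min ym ((2 * (j:ℝ) + 2) / 2 ^ (m + 1)) le_rfl hymr hjr.le
        refine ⟨insert (a₁, yp) (insert (a₀, ym) q),
          hRestr Q' hQ'P _ (Finset.insert_subset hmemQ' hq'Q'),
          fun r hr => Finset.mem_insert_of_mem (Finset.mem_insert_of_mem (hpq hr)), ?_, ?_⟩
        · -- avoidance is preserved
          intro r hr j' hj'
          rcases Finset.mem_insert.mp hr with h | h
          · rw [h]
            have pf1 : (2 * ((i + 1 : ℕ)) : ℝ) / 2 ^ (n + 1) < a₁ := by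
              push_cast
              have he : (2 * ((i:ℝ) + 1)) = 2 * (i:ℝ) + 2 := by ring
              rw [he]; exact ha₁l
            have pf2 : a₁ < (2 * ((i + 1 : ℕ)) + 1 : ℝ) / 2 ^ (n + 1) := by
              push_cast
              have he : (2 * ((i:ℝ) + 1) + 1) = 2 * (i:ℝ) + 3 := by ring
              rw [he]; exact ha₁ev
            exact notGood_of_even pf1 pf2 j'
          · rcases Finset.mem_insert.mp h with h' | h'
            · rw [h']
              exact notGood_of_even heva₀ ha₀r j'
            · exact hqavoid r h' j' hj'
        · -- the forcing property
          intro j' hj' hj'2 g hg1 hg2 hg3 a haA haG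
          have hg3' : ∀ r ∈ q, g r.1 = r.2 := fun r hr =>
            hg3 r (Finset.mem_insert_of_mem (Finset.mem_insert_of_mem hr))
          rcases Nat.lt_succ_iff_lt_or_eq.mp hj' with h | h
          · exact hqforce j' h hj'2 g hg1 hg2 hg3' a haA haG
          · subst h
            simp only [goodInterval, Set.mem_Icc] at haG
            have hga₀ : g a₀ = ym :=
              hg3 (a₀, ym) (Finset.mem_insert_of_mem (Finset.mem_insert_self _ _))
            have hga₁ : g a₁ = yp := hg3 (a₁, yp) (Finset.mem_insert_self _ _)
            have h1 : g a₀ < g a := hg1 ha₀A haA (lt_of_lt_of_le ha₀r haG.1)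
            have h2 : g a < g a₁ := hg1 haA ha₁A (lt_of_le_of_lt haG.2 ha₁l)
            refine ⟨m, hmX, hnm, j, hj2m, ?_⟩
            simp only [goodInterval, Set.mem_Icc]
            rw [hga₀] at h1
            rw [hga₁] at h2
            constructor
            · linarith
            · linarith
      · -- boundary case : x₁ = 1, the good interval is the last one
        obtain ⟨m, hmX, hnm, hm2⟩ := pick_m hX n (1 / (1 - y₀))
        have hy1 : 0 < 1 - y₀ := by linarith
        have hmpos : (0:ℝ) < 2 ^ (m + 1) := by positivity
        have hmpos' : (0:ℝ) < 2 ^ m := by positivity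
        have hj2m : 2 ^ m - 1 < 2 ^ m := Nat.sub_lt (Nat.two_pow_pos m) one_pos
        have hjcast : ((2 ^ m - 1 : ℕ) : ℝ) = 2 ^ m - 1 := by
          push_cast [Nat.cast_sub (Nat.one_le_two_pow)]
          ring
        have h2m1 : (2:ℝ) ^ (m + 1) = 2 * 2 ^ m := by ring
        have hlKval : (2 * ((2 ^ m - 1 : ℕ) : ℝ) + 1) / 2 ^ (m + 1)
            = (2 ^ (m + 1) - 1) / 2 ^ (m + 1) := by
          rw [hjcast, h2m1]; ring_nf
        have hy₀lK : y₀ < (2 * ((2 ^ m - 1 : ℕ) : ℝ) + 1) / 2 ^ (m + 1) := by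
          rw [hlKval, lt_div_iff₀ hmpos, h2m1]
          rw [div_lt_iff₀ hy1] at hm2
          nlinarith
        have hlK1 : (2 * ((2 ^ m - 1 : ℕ) : ℝ) + 1) / 2 ^ (m + 1) < 1 := by
          rw [hlKval, div_lt_one hmpos]; linarith
        obtain ⟨Q, hQP, hqQ, ym, hyml, hymr, hmemQ⟩ :=
          hDense q hqP a₀ ha₀A ha₀notdom x₀ y₀ x₁ y₁ hx₀mem hx₁mem hx₀a₀ hx₁gt
            ha₀max hx₁min ((2 * ((2 ^ m - 1 : ℕ) : ℝ) + 1) / 2 ^ (m + 1)) 1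
            hy₀lK.le hlK1 (le_of_eq hy₁one.symm)
        refine ⟨insert (a₀, ym) q, hRestr Q hQP _ (Finset.insert_subset hmemQ hqQ),
          fun r hr => Finset.mem_insert_of_mem (hpq hr), ?_, ?_⟩
        · intro r hr j' hj'
          rcases Finset.mem_insert.mp hr with h | h
          · rw [h]
            exact notGood_of_even heva₀ ha₀r j'
          · exact hqavoid r h j' hj'
        · intro j' hj' hj'2 g hg1 hg2 hg3 a haA haG
          have hg3' : ∀ r ∈ q, g r.1 = r.2 := fun r hr => hg3 r (Finset.mem_insert_of_mem hr)
          rcases Nat.lt_succ_iff_lt_or_eq.mp hj' with h | h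
          · exact hqforce j' h hj'2 g hg1 hg2 hg3' a haA haG
          · subst h
            simp only [goodInterval, Set.mem_Icc] at haG
            have hga₀ : g a₀ = ym := hg3 (a₀, ym) (Finset.mem_insert_self _ _)
            have h1 : g a₀ < g a := hg1 ha₀A haA (lt_of_lt_of_le ha₀r haG.1)
            have hgaB : g a ∈ B := hg2.mapsTo haA
            have hga1 : g a < 1 := (hB01 hgaB).2
            refine ⟨m, hmX, hnm, 2 ^ m - 1, hj2m, ?_⟩
            simp only [goodInterval, Set.mem_Icc]
            constructor
            · rw [hga₀] at h1; linarith
            · have hrK : (2 * ((2 ^ m - 1 : ℕ) : ℝ) + 2) / 2 ^ (m + 1) = 1 := by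
                rw [hjcast, h2m1]; field_simp; ring
              rw [hrK]; exact hga1.le
  obtain ⟨q, hqP, hpq, _, hforce⟩ := main (2 ^ n)
  refine ⟨q, hqP, hpq, n, hnX, hkn.le, ?_⟩
  intro g hg1 hg2 hg3 a haA ⟨i, hi, haG⟩
  exact hforce i hi hi g hg1 hg2 hg3 a haA haG
end

section
/- Assume Baumgartner's axiom BA. Let A and B be ℵ₁-dense subsets of ℝ, let F ⊆ ℝ \ A and G ⊆ ℝ \ B be closed nowhere dense subsets of ℝ, and let φ : F → G be an order isomorphism (a strictly increasing bijection from F onto G). Then there is an order isomorphism Φ : A ∪ F → B ∪ G with Φ↾F = φ. -/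
/-- `A ⊆ ℝ` is ℵ₁-dense: every nonempty open interval meets `A` in a set of
cardinality ℵ₁. -/
def Aleph1Dense (A : Set ℝ) : Prop :=
  ∀ a b : ℝ, a < b → Cardinal.mk ↥(A ∩ Set.Ioo a b) = Cardinal.aleph 1


lemma exists_e_univ : ∃ e : ℝ → ℝ, StrictMono e ∧ Set.range e = Set.univ :=
  ⟨id, strictMono_id, Set.range_id⟩

lemma exists_e_Iio (b : ℝ) : ∃ e : ℝ → ℝ, StrictMono e ∧ Set.range e = Set.Iio b := by
  refine ⟨fun x => b - Real.exp (-x), ?_, ?_⟩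
  · intro x y hxy
    have : Real.exp (-y) < Real.exp (-x) := Real.exp_lt_exp.2 (by linarith)
    simp only; linarith
  · ext y
    simp only [Set.mem_range, Set.mem_Iio]
    constructor
    · rintro ⟨x, rfl⟩; have := Real.exp_pos (-x); linarith
    · intro hy
      refine ⟨-Real.log (b - y), ?_⟩
      rw [neg_neg, Real.exp_log (by linarith)]; ring

lemma exists_e_Ioi (a : ℝ) : ∃ e : ℝ → ℝ, StrictMono e ∧ Set.range e = Set.Ioi a := by
  refine ⟨fun x => a + Real.exp x, ?_, ?_⟩
  · intro x y hxy
    have : Real.exp x < Real.exp y := Real.exp_lt_exp.2 hxy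
    simp only; linarith
  · ext y
    simp only [Set.mem_range, Set.mem_Ioi]
    constructor
    · rintro ⟨x, rfl⟩; have := Real.exp_pos x; linarith
    · intro hy
      exact ⟨Real.log (y - a), by rw [Real.exp_log (by linarith)]; ring⟩

lemma exists_e_Ioo {a b : ℝ} (hab : a < b) :
    ∃ e : ℝ → ℝ, StrictMono e ∧ Set.range e = Set.Ioo a b := by
  refine ⟨fun x => a + (b - a) * (Real.exp x / (1 + Real.exp x)), ?_, ?_⟩
  · intro x y hxy
    have hx := Real.exp_pos x
    have hy := Real.exp_pos y
    have hlt : Real.exp x < Real.exp y := Real.exp_lt_exp.2 hxy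
    have h1 : Real.exp x / (1 + Real.exp x) < Real.exp y / (1 + Real.exp y) := by
      rw [div_lt_div_iff₀ (by linarith) (by linarith)]; nlinarith
    simp only; nlinarith
  · ext y
    simp only [Set.mem_range, Set.mem_Ioo]
    constructor
    · rintro ⟨x, rfl⟩
      have hx := Real.exp_pos x
      have h1 : Real.exp x / (1 + Real.exp x) > 0 := by positivity
      have h2 : Real.exp x / (1 + Real.exp x) < 1 := by
        rw [div_lt_one (by linarith)]; linarith
      constructor <;> nlinarith
    · rintro ⟨h1, h2⟩
      set s : ℝ := (y - a) / (b - a) with hs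
      have hs0 : 0 < s := div_pos (by linarith) (by linarith)
      have hs1 : s < 1 := by rw [hs, div_lt_one (by linarith)]; linarith
      refine ⟨Real.log (s / (1 - s)), ?_⟩
      rw [Real.exp_log (div_pos hs0 (by linarith))]
      have h1s : (1 : ℝ) - s ≠ 0 := by linarith
      have : s / (1 - s) / (1 + s / (1 - s)) = s := by field_simp; ring
      have hba : b - a ≠ 0 := ne_of_gt (by linarith)
      rw [this, hs, mul_div_assoc', mul_comm, mul_div_assoc, div_self hba, mul_one]
      ring

lemma formBA
    (hBA : ∀ A B : Set ℝ, Aleph1Dense A → Aleph1Dense B →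
      ∃ f : ℝ → ℝ, StrictMonoOn f A ∧ Set.BijOn f A B)
    (A B : Set ℝ) (hA : Aleph1Dense A) (hB : Aleph1Dense B)
    (S T : Set ℝ) (hS : S.OrdConnected) (hT : T.OrdConnected)
    (eS : ∃ e : ℝ → ℝ, StrictMono e ∧ Set.range e = S)
    (eT : ∃ e : ℝ → ℝ, StrictMono e ∧ Set.range e = T) :
    ∃ f : ℝ → ℝ, StrictMonoOn f (A ∩ S) ∧ Set.BijOn f (A ∩ S) (B ∩ T) := by
  obtain ⟨e, he, hre⟩ := eS
  obtain ⟨e', he', hre'⟩ := eT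
  -- transported sets
  have dense_transfer : ∀ (ee : ℝ → ℝ) (C : Set ℝ) (D : Set ℝ), StrictMono ee →
      Set.range ee = D → D.OrdConnected → Aleph1Dense C → Aleph1Dense (ee ⁻¹' C) := by
    intro ee C D hee hrange hD hC a b hab
    have hbij : Set.BijOn ee (ee ⁻¹' C ∩ Set.Ioo a b) (C ∩ Set.Ioo (ee a) (ee b)) := by
      refine ⟨?_, hee.injective.injOn, ?_⟩
      · rintro x ⟨hx1, hx2⟩
        exact ⟨hx1, hee hx2.1, hee hx2.2⟩
      · rintro y ⟨hy1, hy2⟩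
        have hyD : y ∈ D := by
          have h1 : ee a ∈ D := hrange ▸ Set.mem_range_self a
          have h2 : ee b ∈ D := hrange ▸ Set.mem_range_self b
          exact hD.out h1 h2 ⟨le_of_lt hy2.1, le_of_lt hy2.2⟩
        obtain ⟨x, rfl⟩ := hrange ▸ hyD
        exact ⟨x, ⟨hy1, hee.lt_iff_lt.1 hy2.1, hee.lt_iff_lt.1 hy2.2⟩, rfl⟩
    calc Cardinal.mk ↥(ee ⁻¹' C ∩ Set.Ioo a b)
        = Cardinal.mk ↥(C ∩ Set.Ioo (ee a) (ee b)) := Cardinal.mk_congr (Set.BijOn.equiv ee hbij)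
      _ = Cardinal.aleph 1 := hC (ee a) (ee b) (hee hab)
  have hA1 : Aleph1Dense (e ⁻¹' A) := dense_transfer e A S he hre hS hA
  have hB1 : Aleph1Dense (e' ⁻¹' B) := dense_transfer e' B T he' hre' hT hB
  obtain ⟨g, hg, hgbij⟩ := hBA _ _ hA1 hB1
  set einv := Function.invFun e with heinv
  have hinv : ∀ x ∈ S, e (einv x) = x := by
    intro x hx
    exact Function.invFun_eq (by rwa [← Set.mem_range, hre])
  have hlinv : ∀ u : ℝ, einv (e u) = u := fun u =>
    Function.leftInverse_invFun he.injective u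
  refine ⟨fun x => e' (g (einv x)), ?_, ?_, ?_, ?_⟩
  · -- strict mono
    rintro x ⟨hxA, hxS⟩ y ⟨hyA, hyS⟩ hxy
    have hex : e (einv x) = x := hinv x hxS
    have hey : e (einv y) = y := hinv y hyS
    have huv : einv x < einv y := he.lt_iff_lt.1 (by rw [hex, hey]; exact hxy)
    have hxA1 : einv x ∈ e ⁻¹' A := by simp only [Set.mem_preimage, hex]; exact hxA
    have hyA1 : einv y ∈ e ⁻¹' A := by simp only [Set.mem_preimage, hey]; exact hyA
    exact he' (hg hxA1 hyA1 huv)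
  · -- mapsTo
    rintro x ⟨hxA, hxS⟩
    have hxA1 : einv x ∈ e ⁻¹' A := by
      simp only [Set.mem_preimage, hinv x hxS]; exact hxA
    have := hgbij.mapsTo hxA1
    exact ⟨this, hre' ▸ Set.mem_range_self _⟩
  · -- injOn
    rintro x ⟨hxA, hxS⟩ y ⟨hyA, hyS⟩ hxy
    by_contra hne
    rcases lt_or_gt_of_ne hne with h | h
    · have hex : e (einv x) = x := hinv x hxS
      have hey : e (einv y) = y := hinv y hyS
      have huv : einv x < einv y := he.lt_iff_lt.1 (by rw [hex, hey]; exact h)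
      have hxA1 : einv x ∈ e ⁻¹' A := by simp only [Set.mem_preimage, hex]; exact hxA
      have hyA1 : einv y ∈ e ⁻¹' A := by simp only [Set.mem_preimage, hey]; exact hyA
      exact absurd hxy (ne_of_lt (he' (hg hxA1 hyA1 huv)))
    · have hex : e (einv x) = x := hinv x hxS
      have hey : e (einv y) = y := hinv y hyS
      have huv : einv y < einv x := he.lt_iff_lt.1 (by rw [hex, hey]; exact h)
      have hxA1 : einv x ∈ e ⁻¹' A := by simp only [Set.mem_preimage, hex]; exact hxA
      have hyA1 : einv y ∈ e ⁻¹' A := by simp only [Set.mem_preimage, hey]; exact hyA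
      exact absurd hxy.symm (ne_of_lt (he' (hg hyA1 hxA1 huv)))
  · -- surjOn
    rintro z ⟨hzB, hzT⟩
    obtain ⟨w, hw⟩ : z ∈ Set.range e' := hre' ▸ hzT
    have hwB1 : w ∈ e' ⁻¹' B := by simp only [Set.mem_preimage, hw]; exact hzB
    obtain ⟨u, huA1, hgu⟩ := hgbij.surjOn hwB1
    refine ⟨e u, ⟨huA1, hre ▸ Set.mem_range_self u⟩, ?_⟩
    simp only [hlinv u, hgu, hw]

def gapSrc (F K : Set ℝ) : Set ℝ := {y | (∀ a ∈ K, a < y) ∧ ∀ b ∈ F \ K, y < b}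
def gapTgt (F K : Set ℝ) (φ : ℝ → ℝ) : Set ℝ :=
  {z | (∀ a ∈ K, φ a < z) ∧ ∀ b ∈ F \ K, z < φ b}

lemma keygap
    (hBA : ∀ A B : Set ℝ, Aleph1Dense A → Aleph1Dense B →
      ∃ f : ℝ → ℝ, StrictMonoOn f A ∧ Set.BijOn f A B)
    (A B : Set ℝ) (hA : Aleph1Dense A) (hB : Aleph1Dense B)
    (F : Set ℝ) (hFcl : IsClosed F) (φ : ℝ → ℝ) (hφmono : StrictMonoOn φ F)
    (x : ℝ) (hx : x ∉ F) :
    ∃ f : ℝ → ℝ, StrictMonoOn f (A ∩ gapSrc F (F ∩ Set.Iio x)) ∧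
      Set.BijOn f (A ∩ gapSrc F (F ∩ Set.Iio x)) (B ∩ gapTgt F (F ∩ Set.Iio x) φ) := by
  set K := F ∩ Set.Iio x with hK
  have hKsub : K ⊆ F := Set.inter_subset_left
  have hFK : ∀ b, b ∈ F \ K ↔ b ∈ F ∧ x < b := by
    intro b
    constructor
    · rintro ⟨hbF, hbK⟩
      refine ⟨hbF, ?_⟩
      by_contra h
      push_neg at h
      have hbx : b < x := lt_of_le_of_ne h fun he => hx (he ▸ hbF)
      exact hbK ⟨hbF, hbx⟩
    · rintro ⟨hbF, hxb⟩
      exact ⟨hbF, fun hbK => absurd hbK.2 (not_lt.2 (le_of_lt hxb))⟩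
  rcases Set.eq_empty_or_nonempty K with hKe | hKne <;>
    rcases Set.eq_empty_or_nonempty (F \ K) with hFKe | hFKne
  · -- both empty : F = ∅, src = tgt = univ
    have hsrc : gapSrc F K = Set.univ := by
      ext y
      simp only [gapSrc, Set.mem_setOf_eq, Set.mem_univ, iff_true]
      exact ⟨fun a ha => absurd (hKe ▸ ha) (Set.notMem_empty a),
             fun b hb => absurd (hFKe ▸ hb) (Set.notMem_empty b)⟩
    have htgt : gapTgt F K φ = Set.univ := by
      ext z
      simp only [gapTgt, Set.mem_setOf_eq, Set.mem_univ, iff_true]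
      exact ⟨fun a ha => absurd (hKe ▸ ha) (Set.notMem_empty a),
             fun b hb => absurd (hFKe ▸ hb) (Set.notMem_empty b)⟩
    rw [hsrc, htgt]
    exact formBA hBA A B hA hB _ _ Set.ordConnected_univ Set.ordConnected_univ
      exists_e_univ exists_e_univ
  · -- K empty, F \ K nonempty
    have hFKbdd : BddBelow (F \ K) := ⟨x, fun b hb => le_of_lt ((hFK b).1 hb).2⟩
    have hb₀F : sInf (F \ K) ∈ F := by
      have h1 : sInf (F \ K) ∈ closure (F \ K) := csInf_mem_closure hFKne hFKbdd
      exact hFcl.closure_subset_iff.2 Set.diff_subset h1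
    have hb₀lb : ∀ b ∈ F \ K, sInf (F \ K) ≤ b := fun b hb => csInf_le hFKbdd hb
    have hb₀x : x < sInf (F \ K) := by
      have h1 : x ≤ sInf (F \ K) := le_csInf hFKne fun b hb => le_of_lt ((hFK b).1 hb).2
      exact lt_of_le_of_ne h1 fun h => hx (h ▸ hb₀F)
    have hb₀K : sInf (F \ K) ∈ F \ K := (hFK _).2 ⟨hb₀F, hb₀x⟩
    have hsrc : gapSrc F K = Set.Iio (sInf (F \ K)) := by
      ext y
      simp only [gapSrc, Set.mem_setOf_eq, Set.mem_Iio]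
      constructor
      · rintro ⟨_, h2⟩; exact h2 _ hb₀K
      · intro hy
        exact ⟨fun a ha => absurd (hKe ▸ ha) (Set.notMem_empty a),
               fun b hb => lt_of_lt_of_le hy (hb₀lb b hb)⟩
    have htgt : gapTgt F K φ = Set.Iio (φ (sInf (F \ K))) := by
      ext z
      simp only [gapTgt, Set.mem_setOf_eq, Set.mem_Iio]
      constructor
      · rintro ⟨_, h2⟩; exact h2 _ hb₀K
      · intro hz
        refine ⟨fun a ha => absurd (hKe ▸ ha) (Set.notMem_empty a), fun b hb => ?_⟩
        exact lt_of_lt_of_le hz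
          (hφmono.monotoneOn hb₀F ((hFK b).1 hb).1 (hb₀lb b hb))
    rw [hsrc, htgt]
    exact formBA hBA A B hA hB _ _ Set.ordConnected_Iio Set.ordConnected_Iio
      (exists_e_Iio _) (exists_e_Iio _)
  · -- K nonempty, F \ K empty
    have hKbdd : BddAbove K := ⟨x, fun a ha => le_of_lt ha.2⟩
    have ha₀F : sSup K ∈ F := by
      have h1 : sSup K ∈ closure K := csSup_mem_closure hKne hKbdd
      exact hFcl.closure_subset_iff.2 Set.inter_subset_left h1
    have ha₀x : sSup K < x :=
      lt_of_le_of_ne (csSup_le hKne fun a ha => le_of_lt ha.2) fun h => hx (h ▸ ha₀F)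
    have ha₀K : sSup K ∈ K := ⟨ha₀F, ha₀x⟩
    have ha₀ub : ∀ a ∈ K, a ≤ sSup K := fun a ha => le_csSup hKbdd ha
    have hsrc : gapSrc F K = Set.Ioi (sSup K) := by
      ext y
      simp only [gapSrc, Set.mem_setOf_eq, Set.mem_Ioi]
      constructor
      · rintro ⟨h1, _⟩; exact h1 _ ha₀K
      · intro hy
        exact ⟨fun a ha => lt_of_le_of_lt (ha₀ub a ha) hy,
               fun b hb => absurd (hFKe ▸ hb) (Set.notMem_empty b)⟩
    have htgt : gapTgt F K φ = Set.Ioi (φ (sSup K)) := by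
      ext z
      simp only [gapTgt, Set.mem_setOf_eq, Set.mem_Ioi]
      constructor
      · rintro ⟨h1, _⟩; exact h1 _ ha₀K
      · intro hz
        refine ⟨fun a ha => ?_, fun b hb => absurd (hFKe ▸ hb) (Set.notMem_empty b)⟩
        exact lt_of_le_of_lt (hφmono.monotoneOn (hKsub ha) ha₀F (ha₀ub a ha)) hz
    rw [hsrc, htgt]
    exact formBA hBA A B hA hB _ _ Set.ordConnected_Ioi Set.ordConnected_Ioi
      (exists_e_Ioi _) (exists_e_Ioi _)
  · -- both nonempty
    have hKbdd : BddAbove K := ⟨x, fun a ha => le_of_lt ha.2⟩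
    have ha₀F : sSup K ∈ F := by
      have h1 : sSup K ∈ closure K := csSup_mem_closure hKne hKbdd
      exact hFcl.closure_subset_iff.2 Set.inter_subset_left h1
    have ha₀x : sSup K < x :=
      lt_of_le_of_ne (csSup_le hKne fun a ha => le_of_lt ha.2) fun h => hx (h ▸ ha₀F)
    have ha₀K : sSup K ∈ K := ⟨ha₀F, ha₀x⟩
    have ha₀ub : ∀ a ∈ K, a ≤ sSup K := fun a ha => le_csSup hKbdd ha
    have hFKbdd : BddBelow (F \ K) := ⟨x, fun b hb => le_of_lt ((hFK b).1 hb).2⟩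
    have hb₀F : sInf (F \ K) ∈ F := by
      have h1 : sInf (F \ K) ∈ closure (F \ K) := csInf_mem_closure hFKne hFKbdd
      exact hFcl.closure_subset_iff.2 Set.diff_subset h1
    have hb₀lb : ∀ b ∈ F \ K, sInf (F \ K) ≤ b := fun b hb => csInf_le hFKbdd hb
    have hb₀x : x < sInf (F \ K) := by
      have h1 : x ≤ sInf (F \ K) := le_csInf hFKne fun b hb => le_of_lt ((hFK b).1 hb).2
      exact lt_of_le_of_ne h1 fun h => hx (h ▸ hb₀F)
    have hb₀K : sInf (F \ K) ∈ F \ K := (hFK _).2 ⟨hb₀F, hb₀x⟩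
    have hab : sSup K < sInf (F \ K) := ha₀x.trans hb₀x
    have hsrc : gapSrc F K = Set.Ioo (sSup K) (sInf (F \ K)) := by
      ext y
      simp only [gapSrc, Set.mem_setOf_eq, Set.mem_Ioo]
      constructor
      · rintro ⟨h1, h2⟩; exact ⟨h1 _ ha₀K, h2 _ hb₀K⟩
      · rintro ⟨hy1, hy2⟩
        exact ⟨fun a ha => lt_of_le_of_lt (ha₀ub a ha) hy1,
               fun b hb => lt_of_lt_of_le hy2 (hb₀lb b hb)⟩
    have htgt : gapTgt F K φ = Set.Ioo (φ (sSup K)) (φ (sInf (F \ K))) := by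
      ext z
      simp only [gapTgt, Set.mem_setOf_eq, Set.mem_Ioo]
      constructor
      · rintro ⟨h1, h2⟩; exact ⟨h1 _ ha₀K, h2 _ hb₀K⟩
      · rintro ⟨hz1, hz2⟩
        exact ⟨fun a ha =>
            lt_of_le_of_lt (hφmono.monotoneOn (hKsub ha) ha₀F (ha₀ub a ha)) hz1,
          fun b hb =>
            lt_of_lt_of_le hz2 (hφmono.monotoneOn hb₀F ((hFK b).1 hb).1 (hb₀lb b hb))⟩
    rw [hsrc, htgt]
    exact formBA hBA A B hA hB _ _ Set.ordConnected_Ioo Set.ordConnected_Ioo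
      (exists_e_Ioo hab) (exists_e_Ioo (hφmono ha₀F hb₀F hab))
/-- assuming Baumgartner's axiom, any order isomorphism between
closed nowhere dense sets `F ⊆ ℝ \ A` and `G ⊆ ℝ \ B` extends to an order
isomorphism of `A ∪ F` onto `B ∪ G`, for `A`, `B` ℵ₁-dense. -/
theorem stmt5
    (hBA : ∀ A B : Set ℝ, Aleph1Dense A → Aleph1Dense B →
      ∃ f : ℝ → ℝ, StrictMonoOn f A ∧ Set.BijOn f A B)
    (A B : Set ℝ) (hA : Aleph1Dense A) (hB : Aleph1Dense B)
    (F G : Set ℝ)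
    (hFA : F ⊆ Aᶜ) (hGB : G ⊆ Bᶜ)
    (hFcl : IsClosed F) (hGcl : IsClosed G)
    (hFnd : interior (closure F) = ∅) (hGnd : interior (closure G) = ∅)
    (φ : ℝ → ℝ) (hφmono : StrictMonoOn φ F) (hφbij : Set.BijOn φ F G) :
    ∃ Φ : ℝ → ℝ, StrictMonoOn Φ (A ∪ F) ∧ Set.BijOn Φ (A ∪ F) (B ∪ G) ∧
      ∀ x ∈ F, Φ x = φ x := by
  classical
  have hAF : ∀ x ∈ A, x ∉ F := fun x hx hxF => hFA hxF hx
  have hφrefl : ∀ a ∈ F, ∀ b ∈ F, φ a < φ b → a < b := by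
    intro a ha b hb hab
    by_contra h
    push_neg at h
    rcases eq_or_lt_of_le h with h' | h'
    · exact absurd hab (h' ▸ lt_irrefl _)
    · exact absurd hab (not_lt.2 (le_of_lt (hφmono hb ha h')))
  -- choice of per-gap isomorphisms
  have hgood : ∀ K : Set ℝ, ∃ f : ℝ → ℝ,
      (∃ x, x ∉ F ∧ K = F ∩ Set.Iio x) →
        StrictMonoOn f (A ∩ gapSrc F K) ∧
          Set.BijOn f (A ∩ gapSrc F K) (B ∩ gapTgt F K φ) := by
    intro K
    by_cases h : ∃ x, x ∉ F ∧ K = F ∩ Set.Iio x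
    · obtain ⟨x, hx, rfl⟩ := h
      obtain ⟨f, h1, h2⟩ := keygap hBA A B hA hB F hFcl φ hφmono x hx
      exact ⟨f, fun _ => ⟨h1, h2⟩⟩
    · exact ⟨id, fun hh => absurd hh h⟩
  choose σ hσ using hgood
  set Φ : ℝ → ℝ := fun x => if x ∈ F then φ x else σ (F ∩ Set.Iio x) x with hΦ
  have hΦF : ∀ x ∈ F, Φ x = φ x := fun x hx => if_pos hx
  have hΦnF : ∀ x, x ∉ F → Φ x = σ (F ∩ Set.Iio x) x := fun x hx => if_neg hx
  have hKmem : ∀ x, x ∉ F → x ∈ gapSrc F (F ∩ Set.Iio x) := by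
    intro x hx
    refine ⟨fun a ha => ha.2, fun b hb => ?_⟩
    rcases lt_trichotomy x b with h | h | h
    · exact h
    · exact absurd hb.1 (h ▸ hx)
    · exact absurd ⟨hb.1, h⟩ hb.2
  have hσx : ∀ x, x ∉ F →
      StrictMonoOn (σ (F ∩ Set.Iio x)) (A ∩ gapSrc F (F ∩ Set.Iio x)) ∧
        Set.BijOn (σ (F ∩ Set.Iio x)) (A ∩ gapSrc F (F ∩ Set.Iio x))
          (B ∩ gapTgt F (F ∩ Set.Iio x) φ) :=
    fun x hx => hσ _ ⟨x, hx, rfl⟩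
  have hΦA : ∀ x ∈ A, Φ x ∈ B ∩ gapTgt F (F ∩ Set.Iio x) φ := by
    intro x hx
    have hxF := hAF x hx
    rw [hΦnF x hxF]
    exact (hσx x hxF).2.mapsTo ⟨hx, hKmem x hxF⟩
  have sameKey : ∀ x y : ℝ, x ∉ F → y ∉ F → x < y →
      (∀ f ∈ F, ¬(x < f ∧ f < y)) → F ∩ Set.Iio x = F ∩ Set.Iio y := by
    intro x y hx hy hxy hbet
    ext f
    constructor
    · rintro ⟨hfF, hfx⟩; exact ⟨hfF, hfx.trans hxy⟩
    · rintro ⟨hfF, hfy⟩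
      refine ⟨hfF, ?_⟩
      rcases lt_trichotomy f x with h | h | h
      · exact h
      · exact absurd hfF (h ▸ hx)
      · exact absurd ⟨h, hfy⟩ (hbet f hfF)
  -- strict monotonicity
  have hmono : StrictMonoOn Φ (A ∪ F) := by
    intro x hx y hy hxy
    rcases hx with hxA | hxF
    · rcases hy with hyA | hyF
      · -- both in A
        have hxF := hAF x hxA
        have hyF := hAF y hyA
        by_cases hbet : ∃ f ∈ F, x < f ∧ f < y
        · obtain ⟨f, hfF, hfx, hfy⟩ := hbet
          have h1 : Φ x < φ f := by
            have := (hΦA x hxA).2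
            exact this.2 f ⟨hfF, fun hK => absurd hK.2 (not_lt.2 (le_of_lt hfx))⟩
          have h2 : φ f < Φ y := (hΦA y hyA).2.1 f ⟨hfF, hfy⟩
          exact h1.trans h2
        · push_neg at hbet
          have hKeq : F ∩ Set.Iio x = F ∩ Set.Iio y :=
            sameKey x y hxF hyF hxy fun f hf h => absurd h.2 (not_lt.2 (hbet f hf h.1))
          rw [hΦnF x hxF, hΦnF y hyF, ← hKeq]
          exact (hσx x hxF).1 ⟨hxA, hKmem x hxF⟩
            ⟨hyA, hKeq ▸ hKmem y hyF⟩ hxy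
      · -- x in A, y in F
        have hxF := hAF x hxA
        have h1 : Φ x < φ y :=
          (hΦA x hxA).2.2 y ⟨hyF, fun hK => absurd hK.2 (not_lt.2 (le_of_lt hxy))⟩
        rw [hΦF y hyF]
        exact h1
    · rcases hy with hyA | hyF
      · -- x in F, y in A
        have h1 : φ x < Φ y := (hΦA y hyA).2.1 x ⟨hxF, hxy⟩
        rw [hΦF x hxF]
        exact h1
      · -- both in F
        rw [hΦF x hxF, hΦF y hyF]
        exact hφmono hxF hyF hxy
  refine ⟨Φ, hmono, ⟨?_, hmono.injOn, ?_⟩, hΦF⟩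
  · -- mapsTo
    rintro x (hxA | hxF)
    · exact Or.inl (hΦA x hxA).1
    · rw [hΦF x hxF]
      exact Or.inr (hφbij.mapsTo hxF)
  · -- surjOn
    rintro z (hzB | hzG)
    swap
    · obtain ⟨w, hwF, hwz⟩ := hφbij.surjOn hzG
      exact ⟨w, Or.inr hwF, (hΦF w hwF).trans hwz⟩
    · have hzG : z ∉ G := fun h => hGB h hzB
      -- find x generating the right key
      have hkey : ∃ x, x ∉ F ∧ ∀ f ∈ F, (f < x ↔ φ f < z) := by
        have hφin : ∀ f ∈ F, φ f ∈ G := fun f hf => hφbij.mapsTo hf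
        have hφne : ∀ f ∈ F, φ f ≠ z := fun f hf h => hzG (h ▸ hφin f hf)
        rcases Set.eq_empty_or_nonempty (G ∩ Set.Iio z) with hGe | hGne <;>
          rcases Set.eq_empty_or_nonempty (G ∩ Set.Ioi z) with hGe' | hGne'
        · -- G empty
          have hGemp : G = ∅ := by
            ext g
            simp only [Set.mem_empty_iff_false, iff_false]
            intro hg
            rcases lt_trichotomy g z with h | h | h
            · exact absurd (⟨hg, h⟩ : g ∈ G ∩ Set.Iio z) (Set.eq_empty_iff_forall_notMem.1 hGe g)
            · exact hzG (h ▸ hg)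
            · exact absurd (⟨hg, h⟩ : g ∈ G ∩ Set.Ioi z) (Set.eq_empty_iff_forall_notMem.1 hGe' g)
          have hFemp : F = ∅ := by
            ext f
            simp only [Set.mem_empty_iff_false, iff_false]
            intro hf
            exact absurd (hGemp ▸ hφin f hf) (Set.notMem_empty _)
          exact ⟨z, fun h => absurd (hFemp ▸ h) (Set.notMem_empty z),
            fun f hf => absurd (hFemp ▸ hf) (Set.notMem_empty f)⟩
        · -- G ∩ Iio z empty, G ∩ Ioi z nonempty
          have hbdd : BddBelow (G ∩ Set.Ioi z) := ⟨z, fun g hg => le_of_lt hg.2⟩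
          set g₁ := sInf (G ∩ Set.Ioi z) with hg₁
          have hg₁G : g₁ ∈ G :=
            hGcl.closure_subset_iff.2 Set.inter_subset_left (csInf_mem_closure hGne' hbdd)
          have hg₁z : z < g₁ := by
            have h1 : z ≤ g₁ := le_csInf hGne' fun g hg => le_of_lt hg.2
            exact lt_of_le_of_ne h1 fun h => hzG (h ▸ hg₁G)
          obtain ⟨b₁, hb₁F, hb₁⟩ := hφbij.surjOn hg₁G
          have hgtz : ∀ f ∈ F, z < φ f := by
            intro f hf
            rcases lt_trichotomy (φ f) z with h | h | h
            · exact absurd (⟨hφin f hf, h⟩ : φ f ∈ G ∩ Set.Iio z)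
                (Set.eq_empty_iff_forall_notMem.1 hGe (φ f))
            · exact absurd h (hφne f hf)
            · exact h
          refine ⟨b₁ - 1, ?_, ?_⟩
          · intro h
            have h1 : φ (b₁ - 1) < φ b₁ := hφmono h hb₁F (by linarith)
            have h2 : g₁ ≤ φ (b₁ - 1) :=
              csInf_le hbdd ⟨hφin _ h, hgtz _ h⟩
            rw [hb₁] at h1
            linarith
          · intro f hf
            constructor
            · intro hfx
              have h1 : φ f < φ b₁ := hφmono hf hb₁F (by linarith)
              have h2 : g₁ ≤ φ f := csInf_le hbdd ⟨hφin f hf, hgtz f hf⟩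
              rw [hb₁] at h1
              linarith
            · intro h
              exact absurd h (not_lt.2 (le_of_lt (hgtz f hf)))
        · -- G ∩ Iio z nonempty, G ∩ Ioi z empty
          have hbdd : BddAbove (G ∩ Set.Iio z) := ⟨z, fun g hg => le_of_lt hg.2⟩
          set g₀ := sSup (G ∩ Set.Iio z) with hg₀
          have hg₀G : g₀ ∈ G :=
            hGcl.closure_subset_iff.2 Set.inter_subset_left (csSup_mem_closure hGne hbdd)
          have hg₀z : g₀ < z := by
            have h1 : g₀ ≤ z := csSup_le hGne fun g hg => le_of_lt hg.2
            exact lt_of_le_of_ne h1 fun h => hzG (h ▸ hg₀G)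
          obtain ⟨a₀, ha₀F, ha₀⟩ := hφbij.surjOn hg₀G
          have hltz : ∀ f ∈ F, φ f < z := by
            intro f hf
            rcases lt_trichotomy (φ f) z with h | h | h
            · exact h
            · exact absurd h (hφne f hf)
            · exact absurd (⟨hφin f hf, h⟩ : φ f ∈ G ∩ Set.Ioi z)
                (Set.eq_empty_iff_forall_notMem.1 hGe' (φ f))
          refine ⟨a₀ + 1, ?_, ?_⟩
          · intro h
            have h1 : φ a₀ < φ (a₀ + 1) := hφmono ha₀F h (by linarith)
            have h2 : φ (a₀ + 1) ≤ g₀ := le_csSup hbdd ⟨hφin _ h, hltz _ h⟩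
            rw [ha₀] at h1
            linarith
          · intro f hf
            constructor
            · intro _
              exact hltz f hf
            · intro h
              have h2 : φ f ≤ g₀ := le_csSup hbdd ⟨hφin f hf, h⟩
              rw [← ha₀] at h2
              rcases eq_or_lt_of_le h2 with h3 | h3
              · have := hφbij.injOn hf ha₀F h3
                linarith [this]
              · linarith [hφrefl f hf a₀ ha₀F h3]
        · -- both nonempty
          have hbddA : BddAbove (G ∩ Set.Iio z) := ⟨z, fun g hg => le_of_lt hg.2⟩
          have hbddB : BddBelow (G ∩ Set.Ioi z) := ⟨z, fun g hg => le_of_lt hg.2⟩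
          set g₀ := sSup (G ∩ Set.Iio z) with hg₀
          set g₁ := sInf (G ∩ Set.Ioi z) with hg₁
          have hg₀G : g₀ ∈ G :=
            hGcl.closure_subset_iff.2 Set.inter_subset_left (csSup_mem_closure hGne hbddA)
          have hg₁G : g₁ ∈ G :=
            hGcl.closure_subset_iff.2 Set.inter_subset_left (csInf_mem_closure hGne' hbddB)
          have hg₀z : g₀ < z := by
            have h1 : g₀ ≤ z := csSup_le hGne fun g hg => le_of_lt hg.2
            exact lt_of_le_of_ne h1 fun h => hzG (h ▸ hg₀G)
          have hg₁z : z < g₁ := by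
            have h1 : z ≤ g₁ := le_csInf hGne' fun g hg => le_of_lt hg.2
            exact lt_of_le_of_ne h1 fun h => hzG (h ▸ hg₁G)
          obtain ⟨a₀, ha₀F, ha₀⟩ := hφbij.surjOn hg₀G
          obtain ⟨b₁, hb₁F, hb₁⟩ := hφbij.surjOn hg₁G
          have hab : a₀ < b₁ := hφrefl a₀ ha₀F b₁ hb₁F (by rw [ha₀, hb₁]; linarith)
          have hsplit : ∀ f ∈ F, φ f ≤ g₀ ∨ g₁ ≤ φ f := by
            intro f hf
            rcases lt_trichotomy (φ f) z with h | h | h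
            · exact Or.inl (le_csSup hbddA ⟨hφin f hf, h⟩)
            · exact absurd h (hφne f hf)
            · exact Or.inr (csInf_le hbddB ⟨hφin f hf, h⟩)
          set x := (a₀ + b₁) / 2 with hx
          have hxa : a₀ < x := by rw [hx]; linarith
          have hxb : x < b₁ := by rw [hx]; linarith
          refine ⟨x, ?_, ?_⟩
          · intro h
            rcases hsplit x h with h1 | h1
            · have : φ a₀ < φ x := hφmono ha₀F h hxa
              rw [ha₀] at this
              linarith
            · have : φ x < φ b₁ := hφmono h hb₁F hxb
              rw [hb₁] at this
              linarith
          · intro f hf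
            constructor
            · intro hfx
              rcases hsplit f hf with h1 | h1
              · linarith
              · have h2 : b₁ ≤ f := by
                  rcases eq_or_lt_of_le (hb₁ ▸ h1 : φ b₁ ≤ φ f) with h3 | h3
                  · exact le_of_eq (hφbij.injOn hb₁F hf h3)
                  · exact le_of_lt (hφrefl b₁ hb₁F f hf h3)
                linarith
            · intro h
              have h1 : φ f ≤ g₀ := by
                rcases hsplit f hf with h1 | h1
                · exact h1
                · linarith
              rw [← ha₀] at h1
              rcases eq_or_lt_of_le h1 with h3 | h3
              · have := hφbij.injOn hf ha₀F h3
                linarith [this]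
              · linarith [hφrefl f hf a₀ ha₀F h3]
      obtain ⟨x, hxF, hch⟩ := hkey
      have hztgt : z ∈ gapTgt F (F ∩ Set.Iio x) φ := by
        refine ⟨fun a ha => (hch a ha.1).1 ha.2, fun b hb => ?_⟩
        have h1 : ¬ φ b < z := fun h => hb.2 ⟨hb.1, (hch b hb.1).2 h⟩
        have h2 : φ b ≠ z := fun h => hzG (h ▸ hφbij.mapsTo hb.1)
        rcases lt_trichotomy z (φ b) with h | h | h
        · exact h
        · exact absurd h.symm h2
        · exact absurd h h1
      obtain ⟨u, ⟨huA, huSrc⟩, hσu⟩ := (hσx x hxF).2.surjOn ⟨hzB, hztgt⟩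
      have huF : u ∉ F := hAF u huA
      have hKu : F ∩ Set.Iio u = F ∩ Set.Iio x := by
        ext f
        constructor
        · rintro ⟨hfF, hfu⟩
          refine ⟨hfF, ?_⟩
          by_contra h
          have hfK : f ∈ F \ (F ∩ Set.Iio x) := ⟨hfF, fun hK => h hK.2⟩
          exact absurd hfu (not_lt.2 (le_of_lt (huSrc.2 f hfK)))
        · rintro ⟨hfF, hfx⟩
          exact ⟨hfF, huSrc.1 f ⟨hfF, hfx⟩⟩
      refine ⟨u, Or.inl huA, ?_⟩
      rw [hΦnF u huF, hKu]
      exact hσu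
end

section
/- Let m ≤ n be natural numbers, let π be a permutation of 2^m, and let f be a finite partial injection from 2^ω to 2^ω such that: (a) f(a)↾m = π(a↾m) for every a ∈ dom(f); (b) the map a ↦ a↾(n+1) is injective on dom(f) and the map b ↦ b↾(n+1) is injective on ran(f); and (c) a(n) = 0 and f(a)(n) = 0 for every a ∈ dom(f). Then there exists a permutation π' of 2^{n+1} such that π'(t)↾m = π(t↾m) for every t ∈ 2^{n+1}, π'(t)(n) = t(n) for every t ∈ 2^{n+1}, and π'(a↾(n+1)) = f(a)↾(n+1) for every a ∈ dom(f). -/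
/-! Let `σ` act on `2^(n+1)` as `π` on the first `m` bits and as the identity on the others.
For the colouring `t ↦ (t↾m, t(n))` of `2^(n+1)`, `σ (a↾(n+1))` and `f(a)↾(n+1)` have the same
colour for every `a ∈ D`, and both families are injective on `D`; so inside each colour class of
the finite set `2^(n+1)` one partial injection extends to a permutation, and gluing these gives a
colour-preserving `τ` with `π' = τ ∘ σ`. -/

open Function Set

namespace Equiv.Perm

theorem exists_comp_eq_of_injective {α ι : Type*} [Finite α] {u v : ι → α}
    (hu : Injective u) (hv : Injective v) : ∃ τ : Perm α, τ ∘ u = v := by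
  classical
  let e : range u ≃ range v := (Equiv.ofInjective u hu).symm.trans (Equiv.ofInjective v hv)
  refine ⟨e.extendSubtype, funext fun i => ?_⟩
  simp [e, extendSubtype_apply_of_mem e (u i) (mem_range_self i)]

theorem exists_fiberwise_comp_eqOn {α β ι : Type*} [Finite α] (c : α → β) {D : Set ι}
    {u v : ι → α} (hu : InjOn u D) (hv : InjOn v D) (huv : ∀ i ∈ D, c (u i) = c (v i)) :
    ∃ τ : Perm α, c ∘ τ = c ∧ EqOn (τ ∘ u) v D := by
  have (y : β) : ∃ τ : Perm {x // c x = y}, ∀ i : {i // i ∈ D ∧ c (u i) = y},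
      τ ⟨u i, i.2.2⟩ = ⟨v i, huv i i.2.1 ▸ i.2.2⟩ := by
    obtain ⟨τ, hτ⟩ := exists_comp_eq_of_injective
      (u := fun i : {i // i ∈ D ∧ c (u i) = y} => (⟨u i, i.2.2⟩ : {x // c x = y}))
      (v := fun i : {i // i ∈ D ∧ c (u i) = y} => (⟨v i, huv i i.2.1 ▸ i.2.2⟩ : {x // c x = y}))
      (fun i j h => Subtype.ext (hu i.2.1 j.2.1 (congrArg Subtype.val h)))
      (fun i j h => Subtype.ext (hv i.2.1 j.2.1 (congrArg Subtype.val h)))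
    exact ⟨τ, congrFun hτ⟩
  choose τ hτ using this
  refine ⟨Equiv.ofFiberEquiv τ, funext (ofFiberEquiv_map τ), fun i hi => ?_⟩
  exact congrArg Subtype.val (hτ _ ⟨i, hi, rfl⟩)

end Equiv.Perm

theorem Fin.exists_perm_castLE {β : Type*} {k N : ℕ} (h : k ≤ N) (π : Equiv.Perm (Fin k → β)) :
    ∃ σ : Equiv.Perm (Fin N → β),
      (∀ t, (fun i => σ t (Fin.castLE h i)) = π (fun i => t (Fin.castLE h i))) ∧
      ∀ t (i : Fin N), k ≤ i → σ t i = t i := by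
  classical
  let reindex : (Fin k → β) ≃ ({i : Fin N // (i : ℕ) < k} → β) :=
    (Fin.castLEquiv h).arrowCongr (Equiv.refl β)
  let σ : Equiv.Perm (Fin N → β) :=
    (Equiv.piEquivPiSubtypeProd (fun i : Fin N => (i : ℕ) < k) _).symm.permCongr
      ((reindex.permCongr π).prodCongr (Equiv.refl _))
  refine ⟨σ, fun t => ?_, fun t i hi => ?_⟩
  · funext j
    simp only [σ, Equiv.permCongr_apply, Equiv.symm_symm, Equiv.piEquivPiSubtypeProd_apply,
      Equiv.prodCongr_apply, Equiv.piEquivPiSubtypeProd_symm_apply, Fin.val_castLE, Fin.is_lt,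
      dite_true]
    rfl
  · simp [σ, not_lt.2 hi, Equiv.permCongr_apply]

theorem stmt13_general (m n : ℕ) (hmn : m ≤ n)
    (π : Equiv.Perm (Fin m → Bool))
    (D : Set (ℕ → Bool))
    (f : (ℕ → Bool) → (ℕ → Bool)) (hfinj : Set.InjOn f D)
    (ha : ∀ a ∈ D,
      (fun i : Fin m => f a i.val) = π (fun i : Fin m => a i.val))
    (hb1 : Set.InjOn (fun a : ℕ → Bool => (fun i : Fin (n + 1) => a i.val)) D)
    (hb2 : Set.InjOn (fun b : ℕ → Bool => (fun i : Fin (n + 1) => b i.val)) (f '' D))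
    (hc : ∀ a ∈ D, a n = false ∧ f a n = false) :
    ∃ π' : Equiv.Perm (Fin (n + 1) → Bool),
      (∀ t : Fin (n + 1) → Bool,
        (fun i : Fin m => π' t (Fin.castLE (Nat.le_succ_of_le hmn) i)) =
          π (fun i : Fin m => t (Fin.castLE (Nat.le_succ_of_le hmn) i))) ∧
      (∀ t : Fin (n + 1) → Bool, π' t (Fin.last n) = t (Fin.last n)) ∧
      (∀ a ∈ D,
        π' (fun i : Fin (n + 1) => a i.val) = (fun i : Fin (n + 1) => f a i.val)) := by
  obtain ⟨σ, hσlow, hσhigh⟩ := Fin.exists_perm_castLE (Nat.le_succ_of_le hmn) π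
  have hσlast (t : Fin (n + 1) → Bool) : σ t (Fin.last n) = t (Fin.last n) := hσhigh t _ hmn
  let colour (t : Fin (n + 1) → Bool) : (Fin m → Bool) × Bool :=
    (fun i => t (Fin.castLE (Nat.le_succ_of_le hmn) i), t (Fin.last n))
  obtain ⟨τ, hτcolour, hτ⟩ := Equiv.Perm.exists_fiberwise_comp_eqOn colour
    (σ.injective.comp_injOn hb1) (hb2.comp hfinj (mapsTo_image f D)) fun a haD => by
      simp only [colour, Function.comp_apply, hσlow, hσlast]
      exact Prod.ext (ha a haD).symm ((hc a haD).1.trans (hc a haD).2.symm)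
  refine ⟨σ.trans τ, fun t => ?_, fun t => ?_, fun a haD => hτ haD⟩
  · exact (congrArg Prod.fst (congrFun hτcolour (σ t))).trans (hσlow t)
  · exact (congrArg Prod.snd (congrFun hτcolour (σ t))).trans (hσlast t)

/-- the key density step for Medini's forcing `𝕄_{A,B}`.  Given
`m ≤ n`, a permutation `π` of `2^m` and a finite partial injection `f` of `2^ω`
respecting `π`, whose domain and range are separated by restriction to `n+1`
and avoid bit `n`, there is a permutation `π'` of `2^(n+1)` extending `π`,
preserving bit `n`, and compatible with `f`. -/
theorem stmt13 (m n : ℕ) (hmn : m ≤ n)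
    (π : Equiv.Perm (Fin m → Bool))
    (D : Set (ℕ → Bool)) (hD : D.Finite)
    (f : (ℕ → Bool) → (ℕ → Bool)) (hfinj : Set.InjOn f D)
    (ha : ∀ a ∈ D,
      (fun i : Fin m => f a i.val) = π (fun i : Fin m => a i.val))
    (hb1 : Set.InjOn (fun a : ℕ → Bool => (fun i : Fin (n + 1) => a i.val)) D)
    (hb2 : Set.InjOn (fun b : ℕ → Bool => (fun i : Fin (n + 1) => b i.val)) (f '' D))
    (hc : ∀ a ∈ D, a n = false ∧ f a n = false) :
    ∃ π' : Equiv.Perm (Fin (n + 1) → Bool),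
      (∀ t : Fin (n + 1) → Bool,
        (fun i : Fin m => π' t (Fin.castLE (Nat.le_succ_of_le hmn) i)) =
          π (fun i : Fin m => t (Fin.castLE (Nat.le_succ_of_le hmn) i))) ∧
      (∀ t : Fin (n + 1) → Bool, π' t (Fin.last n) = t (Fin.last n)) ∧
      (∀ a ∈ D,
        π' (fun i : Fin (n + 1) => a i.val) = (fun i : Fin (n + 1) => f a i.val)) :=
  stmt13_general m n hmn π D f hfinj ha hb1 hb2 hc
end

section
/- Let (X_α)_{α<ω₁} be a tower of infinite subsets of ℕ with X := X_0 infinite and co-infinite. Let A = {ℕ \ X_α : α < ω₁} and let B be a family of infinite subsets of ℕ each of which is almost disjoint from X. If h : 2^ω → 2^ω is a function with h``A ⊆ B (identifying subsets of ℕ with their characteristic functions) and there are infinitely many n ∈ X such that h``[x(n)=1] ⊆ [x(n)=1], then the tower (X_α)_{α<ω₁} has a pseudointersection. -/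
/-!
The pseudointersection is `S = {n ∈ X₀ | h''[x(n)=1] ⊆ [x(n)=1]}`. For each `α`, the
characteristic function `y` of `ℕ \ X_α` lies in `A`, so `h y ∈ B` is almost disjoint from `X₀`.
Every `n ∈ S \ X_α` has `y n = 1`, hence `h y n = 1`, and `n ∈ X₀`; so `S \ X_α` is contained in
the finite set `{h y = 1} ∩ X₀`.
-/

lemma preserved_coords_diff_finite_of_inter_finite {C Z : Set ℕ}
    {h : (ℕ → Bool) → (ℕ → Bool)} {y : ℕ → Bool} (hy : ∀ n, y n = true ↔ n ∉ Z)
    (hfin : ({n | h y n = true} ∩ C).Finite) :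
    ({n ∈ C | h '' {y : ℕ → Bool | y n = true} ⊆ {y : ℕ → Bool | y n = true}} \ Z).Finite := by
  refine hfin.subset ?_
  rintro n ⟨⟨hnC, hpres⟩, hnZ⟩
  exact ⟨hpres ⟨y, (hy n).2 hnZ, rfl⟩, hnC⟩

theorem stmt14_general
    (X : Ordinal → Set ℕ)
    (A B : Set (ℕ → Bool))
    (hA : A = {y : ℕ → Bool | ∃ α < (Cardinal.aleph 1).ord, ∀ n : ℕ, y n = true ↔ n ∉ X α})
    (hBad : ∀ Y ∈ B, ({n : ℕ | Y n = true} ∩ X 0).Finite)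
    (h : (ℕ → Bool) → (ℕ → Bool))
    (hh : h '' A ⊆ B)
    (hinf : {n ∈ X 0 |
      h '' {y : ℕ → Bool | y n = true} ⊆ {y : ℕ → Bool | y n = true}}.Infinite) :
    ∃ S : Set ℕ, S.Infinite ∧ ∀ α < (Cardinal.aleph 1).ord, (S \ X α).Finite := by
  classical
  refine ⟨_, hinf, fun α hα => ?_⟩
  let y : ℕ → Bool := fun n => decide (n ∉ X α)
  have hy : ∀ n, y n = true ↔ n ∉ X α := fun n => decide_eq_true_iff
  have hyA : y ∈ A := hA ▸ ⟨α, hα, hy⟩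
  exact preserved_coords_diff_finite_of_inter_finite hy (hBad _ (hh ⟨y, hyA, rfl⟩))

/-- if `h : 2^ω → 2^ω` maps `A` (the complements of the tower
elements) into `B` (infinite sets almost disjoint from `X = X 0`) and for
infinitely many `n ∈ X` we have `h``[x(n)=1] ⊆ [x(n)=1]`, then the tower has a
pseudointersection. -/
theorem stmt14
    (X : Ordinal → Set ℕ)
    (htower_inf : ∀ α < (Cardinal.aleph 1).ord, (X α).Infinite)
    (htower : ∀ α β : Ordinal, α < β → β < (Cardinal.aleph 1).ord → (X β \ X α).Finite)
    (hX0inf : (X 0).Infinite) (hX0coinf : (X 0)ᶜ.Infinite)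
    (A B : Set (ℕ → Bool))
    (hA : A = {y : ℕ → Bool | ∃ α < (Cardinal.aleph 1).ord, ∀ n : ℕ, y n = true ↔ n ∉ X α})
    (hBinf : ∀ Y ∈ B, {n : ℕ | Y n = true}.Infinite)
    (hBad : ∀ Y ∈ B, ({n : ℕ | Y n = true} ∩ X 0).Finite)
    (h : (ℕ → Bool) → (ℕ → Bool))
    (hh : h '' A ⊆ B)
    (hinf : {n ∈ X 0 |
      h '' {y : ℕ → Bool | y n = true} ⊆ {y : ℕ → Bool | y n = true}}.Infinite) :
    ∃ S : Set ℕ, S.Infinite ∧ ∀ α < (Cardinal.aleph 1).ord, (S \ X α).Finite :=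
  stmt14_general X A B hA hBad h hh hinf
end

section
/- Let h : [0,1] → [0,1] be a strictly increasing bijection, and for n ∈ ℕ let G_n = ⋃_{i<2^n} [(2i+1)/2^{n+1}, (2i+2)/2^{n+1}] be the union of the intervals good at n. If there are infinitely many n ∈ ℕ such that h``G_n = G_n, then h is the identity map on [0,1]. -/
open Set

section LeftEndpoints

variable {α : Type*} [LinearOrder α]

/-- Left endpoints of the components of `S`; the witness `y` lies in `I` so that a self-map of `I`
can transport it. -/
def leftEndpoints (I S : Set α) : Set α :=
  {x ∈ S | ∃ y ∈ I, y < x ∧ Disjoint (Ioo y x) S}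

theorem mapsTo_leftEndpoints {f : α → α} {I S : Set α} (hf : StrictMonoOn f I)
    (hI : MapsTo f I I) (hSI : S ⊆ I) (hfS : f '' S = S) :
    MapsTo f (leftEndpoints I S) (leftEndpoints I S) := by
  rintro x ⟨hxS, y, hyI, hyx, hdisj⟩
  have hxI := hSI hxS
  refine ⟨hfS ▸ mem_image_of_mem f hxS, f y, hI hyI, hf hyI hxI hyx, ?_⟩
  rw [disjoint_left]
  rintro z ⟨hyz, hzx⟩ hzS
  obtain ⟨w, hwS, rfl⟩ : z ∈ f '' S := by rwa [hfS]
  have hwI := hSI hwS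
  exact disjoint_left.mp hdisj
    ⟨(hf.lt_iff_lt hyI hwI).mp hyz, (hf.lt_iff_lt hwI hxI).mp hzx⟩ hwS

theorem StrictMonoOn.eq_self_of_mapsTo {f : α → α} {L : Set α} (hL : L.Finite)
    (hf : StrictMonoOn f L) (hmaps : MapsTo f L L) {x : α} (hx : x ∈ L) : f x = x := by
  have := hL.to_subtype
  have hg : StrictMono (hmaps.restrict f L L) := fun a b hab => hf a.2 b.2 hab
  have : hmaps.restrict f L L ⟨x, hx⟩ = ⟨x, hx⟩ := le_antisymm hg.apply_le hg.le_apply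
  exact congrArg Subtype.val this

end LeftEndpoints

def goodSet (n : ℕ) : Set ℝ := ⋃ i < 2 ^ n, goodInterval n i

theorem mem_goodInterval_iff {n i : ℕ} {x : ℝ} :
    x ∈ goodInterval n i ↔ 2 * i + 1 ≤ 2 ^ (n + 1) * x ∧ 2 ^ (n + 1) * x ≤ 2 * i + 2 := by
  have h : (0 : ℝ) < 2 ^ (n + 1) := by positivity
  rw [goodInterval, mem_Icc, div_le_iff₀ h, le_div_iff₀ h, mul_comm x]

theorem goodSet_subset_Icc (n : ℕ) : goodSet n ⊆ Icc 0 1 := by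
  simp only [goodSet, iUnion_subset_iff]
  intro i hi x hx
  rw [mem_goodInterval_iff] at hx
  have hi' : (2 * i + 2 : ℝ) ≤ 2 ^ (n + 1) := by
    rw [pow_succ]; exact_mod_cast (by omega : 2 * i + 2 ≤ 2 ^ n * 2)
  constructor <;> nlinarith [pow_pos (two_pos (α := ℝ)) (n + 1)]

theorem odd_dyadic_mem_goodSet {n i : ℕ} (hi : i < 2 ^ n) :
    (2 * i + 1 : ℝ) / 2 ^ (n + 1) ∈ goodSet n :=
  mem_biUnion hi (left_mem_Icc.mpr (by gcongr; norm_num))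

theorem mem_leftEndpoints_goodSet {n i : ℕ} (hi : i < 2 ^ n) :
    (2 * i + 1 : ℝ) / 2 ^ (n + 1) ∈ leftEndpoints (Icc 0 1) (goodSet n) := by
  have hpos : (0 : ℝ) < 2 ^ (n + 1) := by positivity
  have hG := odd_dyadic_mem_goodSet hi
  have hlt : (2 * i : ℝ) / 2 ^ (n + 1) < (2 * i + 1 : ℝ) / 2 ^ (n + 1) := by gcongr; linarith
  refine ⟨hG, _, ⟨by positivity, hlt.le.trans (goodSet_subset_Icc n hG).2⟩, hlt, ?_⟩
  rw [disjoint_left]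
  rintro z ⟨hiz, hzi⟩ hz
  simp only [goodSet, mem_iUnion, mem_goodInterval_iff] at hz
  obtain ⟨j, -, hj1, hj2⟩ := hz
  rw [div_lt_iff₀ hpos] at hiz
  rw [lt_div_iff₀ hpos] at hzi
  have hji : (j : ℝ) < i := by linarith
  have hij : (i : ℝ) < j + 1 := by linarith
  norm_cast at hji hij
  omega

theorem leftEndpoints_goodSet_subset (n : ℕ) :
    leftEndpoints (Icc 0 1) (goodSet n) ⊆
      (fun i : ℕ => (2 * i + 1 : ℝ) / 2 ^ (n + 1)) '' Iio (2 ^ n) := by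
  rintro x ⟨hx, y, -, hyx, hdisj⟩
  simp only [goodSet, mem_iUnion] at hx
  obtain ⟨i, hi, hxi⟩ := hx
  refine ⟨i, hi, hxi.1.eq_of_not_lt fun hlt => ?_⟩
  obtain ⟨z, hz, hzx⟩ := exists_between (max_lt hyx hlt)
  rw [max_lt_iff] at hz
  exact disjoint_left.mp hdisj ⟨hz.1, hzx⟩
    (mem_biUnion hi ⟨hz.2.le, hzx.le.trans hxi.2⟩)

theorem exists_odd_mem_Icc_sub_two {N : ℕ} {t : ℝ} (ht : 1 ≤ t) (htN : t ≤ 2 * N) :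
    ∃ i < N, t - 2 ≤ 2 * i + 1 ∧ (2 * i + 1 : ℝ) ≤ t := by
  have h0 : 0 ≤ (t - 1) / 2 := by linarith
  refine ⟨⌊(t - 1) / 2⌋₊, ?_, ?_, ?_⟩
  · exact_mod_cast (Nat.floor_le h0).trans_lt (by linarith : (t - 1) / 2 < N)
  · linarith [Nat.lt_floor_add_one ((t - 1) / 2)]
  · linarith [Nat.floor_le h0]

theorem exists_odd_mem_Icc_add_two {N : ℕ} {t : ℝ} (ht : 0 ≤ t) (htN : t ≤ 2 * N - 2) :
    ∃ i < N, t ≤ 2 * i + 1 ∧ (2 * i + 1 : ℝ) ≤ t + 2 := by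
  have h0 : 0 ≤ (t + 1) / 2 := by linarith
  refine ⟨⌊(t + 1) / 2⌋₊, ?_, ?_, ?_⟩
  · exact_mod_cast (Nat.floor_le h0).trans_lt (by linarith : (t + 1) / 2 < N)
  · linarith [Nat.lt_floor_add_one ((t + 1) / 2)]
  · linarith [Nat.floor_le h0]

theorem abs_apply_sub_le_of_forall_apply_eq {f : ℝ → ℝ} {n : ℕ}
    (hmono : MonotoneOn f (Icc 0 1)) (hmaps : MapsTo f (Icc 0 1) (Icc 0 1))
    (hfix : ∀ i : ℕ, i < 2 ^ n →
      f ((2 * i + 1 : ℝ) / 2 ^ (n + 1)) = (2 * i + 1 : ℝ) / 2 ^ (n + 1))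
    {x : ℝ} (hx : x ∈ Icc 0 1) : |f x - x| ≤ 2 / 2 ^ (n + 1) := by
  have hp : (0 : ℝ) < 2 ^ (n + 1) := by positivity
  have hN : (2 : ℝ) ^ (n + 1) = 2 * (2 ^ n : ℕ) := by push_cast; ring
  have hmem {i : ℕ} (hi : i < 2 ^ n) : (2 * i + 1 : ℝ) / 2 ^ (n + 1) ∈ Icc 0 1 :=
    goodSet_subset_Icc n (odd_dyadic_mem_goodSet hi)
  have hfx := hmaps hx
  rw [abs_sub_le_iff, sub_le_comm]
  constructor
  · rcases le_or_gt (2 ^ (n + 1) * x) (2 ^ (n + 1) - 2) with hx1 | hx1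
    · obtain ⟨i, hi, hti, hit⟩ :=
        exists_odd_mem_Icc_add_two (N := 2 ^ n) (mul_nonneg hp.le hx.1) (hN ▸ hx1)
      have h1 : x ≤ (2 * i + 1 : ℝ) / 2 ^ (n + 1) := by rw [le_div_iff₀ hp]; linarith
      have h2 : (2 * i + 1 : ℝ) / 2 ^ (n + 1) ≤ x + 2 / 2 ^ (n + 1) := by
        rw [← sub_le_iff_le_add, div_sub_div_same, div_le_iff₀ hp]; linarith
      linarith [hfix i hi ▸ hmono hx (hmem hi) h1]
    · have : 1 - 2 / 2 ^ (n + 1) < x := by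
        rw [sub_lt_comm, lt_div_iff₀ hp]; linarith
      linarith [hfx.2]
  · rcases le_or_gt 1 (2 ^ (n + 1) * x) with hx0 | hx0
    · obtain ⟨i, hi, hti, hit⟩ :=
        exists_odd_mem_Icc_sub_two (N := 2 ^ n) hx0 (hN ▸ mul_le_of_le_one_right hp.le hx.2)
      have h1 : (2 * i + 1 : ℝ) / 2 ^ (n + 1) ≤ x := by rw [div_le_iff₀ hp]; linarith
      have h2 : x - 2 / 2 ^ (n + 1) ≤ (2 * i + 1 : ℝ) / 2 ^ (n + 1) := by
        rw [sub_le_iff_le_add, ← add_div, le_div_iff₀ hp]; linarith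
      linarith [hfix i hi ▸ hmono (hmem hi) hx h1]
    · have : x < 2 / 2 ^ (n + 1) := by rw [lt_div_iff₀ hp]; linarith
      linarith [hfx.1]

theorem apply_odd_dyadic_eq {f : ℝ → ℝ} {n : ℕ} (hmono : StrictMonoOn f (Icc 0 1))
    (hmaps : MapsTo f (Icc 0 1) (Icc 0 1)) (hG : f '' goodSet n = goodSet n) (i : ℕ)
    (hi : i < 2 ^ n) : f ((2 * i + 1 : ℝ) / 2 ^ (n + 1)) = (2 * i + 1 : ℝ) / 2 ^ (n + 1) := by
  have hL : leftEndpoints (Icc 0 1) (goodSet n) ⊆ Icc 0 1 :=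
    fun x hx => goodSet_subset_Icc n hx.1
  exact (hmono.mono hL).eq_self_of_mapsTo ((finite_Iio _).image _ |>.subset
      (leftEndpoints_goodSet_subset n))
    (mapsTo_leftEndpoints hmono hmaps (goodSet_subset_Icc n) hG) (mem_leftEndpoints_goodSet hi)

/-- if a strictly increasing bijection `h` of `[0,1]` onto itself
satisfies `h``G_n = G_n` for infinitely many `n`, where `G_n` is the union of
the intervals good at `n`, then `h` is the identity on `[0,1]`. -/
theorem stmt15 (h : ℝ → ℝ)
    (hmono : StrictMonoOn h (Set.Icc (0 : ℝ) 1))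
    (hbij : Set.BijOn h (Set.Icc (0 : ℝ) 1) (Set.Icc (0 : ℝ) 1))
    (hinf : {n : ℕ |
      h '' (⋃ i < 2 ^ n, goodInterval n i) = ⋃ i < 2 ^ n, goodInterval n i}.Infinite) :
    ∀ x ∈ Set.Icc (0 : ℝ) 1, h x = x := by
  intro x hx
  refine eq_of_forall_dist_le fun ε hε => ?_
  obtain ⟨m, hm⟩ := exists_pow_lt_of_lt_one hε one_half_lt_one
  obtain ⟨n, hn, hmn⟩ := hinf.exists_gt m
  have hfix := apply_odd_dyadic_eq hmono hbij.mapsTo hn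
  calc dist (h x) x = |h x - x| := Real.dist_eq _ _
    _ ≤ 2 / 2 ^ (n + 1) :=
      abs_apply_sub_le_of_forall_apply_eq hmono.monotoneOn hbij.mapsTo hfix hx
    _ = (1 / 2) ^ n := by rw [pow_succ, one_div_pow]; field_simp
    _ ≤ (1 / 2) ^ m := pow_le_pow_of_le_one (by norm_num) (by norm_num) hmn.le
    _ ≤ ε := hm.le
end
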